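/- arXiv:2408.02158 — 6 statements merged into one kernel-verified Lean document; each statement's English description precedes it below -/
import Mathlib

section
/- Let F = ∏_{s∈S} F_s / D be an ultraproduct of fields, and let L_s be a finite Galois extension of F_s of degree d (a fixed positive integer) for D-almost all s. Then the ultraproduct L = ∏_{s∈S} L_s / D is a Galois extension of degree d over F. -/
/-!
Everything is transported from almost all factors by Łoś-style arguments. Choosing an
`F s`-basis of `L s` for almost all `s`, the ultraproducts of the basis vectors form a `K`-basis
of `M`, so `[M : K] = d`. Enumerating `Gal(L s / F s)` as `σ s 1, …, σ s d` and taking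
ultraproducts coordinatewise gives `d` pairwise distinct `K`-endomorphisms of `M`; since a finite
extension has at most `[M : K]` of them, with equality exactly when it is Galois, `M / K` is Galois.
-/

/-- `K` (with surjection `π` from the product) is the ultraproduct of the family `R`
with respect to the ultrafilter `D`. -/
def IsUltraproduct {S : Type*} {R : S → Type*} [∀ s, CommRing (R s)]
    {K : Type*} [CommRing K] (D : Ultrafilter S) (π : (∀ s, R s) →+* K) : Prop :=
  Function.Surjective π ∧ ∀ f g : ∀ s, R s, π f = π g ↔ {s | f s = g s} ∈ D

open Filter Module

theorem IsGalois.exists_injective_algHom_of_finrank_eq {F E : Type*} [Field F] [Field E]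
    [Algebra F E] [FiniteDimensional F E] [IsGalois F E] {d : ℕ} (h : finrank F E = d) :
    ∃ σ : Fin d → (E →ₐ[F] E), Function.Injective σ := by
  have hcard : Nat.card (E →ₐ[F] E) = d := by
    rw [← Nat.card_congr (Algebra.IsAlgebraic.algEquivEquivAlgHom F E).toEquiv,
      IsGalois.card_aut_eq_finrank, h]
  exact ⟨(Finite.equivFin _).symm ∘ finCongr hcard.symm,
    (Finite.equivFin _).symm.injective.comp (finCongr _).injective⟩

theorem IsGalois.of_injective_algHom {K M : Type*} [Field K] [Field M] [Algebra K M]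
    [FiniteDimensional K M] {ι : Type*} [Finite ι] (σ : ι → (M →ₐ[K] M))
    (hσ : Function.Injective σ) (hcard : finrank K M ≤ Nat.card ι) : IsGalois K M := by
  refine IsGalois.of_card_aut_eq_finrank K M ?_
  rw [Nat.card_congr (Algebra.IsAlgebraic.algEquivEquivAlgHom K M).toEquiv]
  exact le_antisymm (card_algHom_le_finrank K M M)
    (hcard.trans (Nat.card_le_card_of_injective σ hσ))

namespace IsUltraproduct

variable {S : Type*} {D : Ultrafilter S}

section Ring

variable {R R' : S → Type*} [∀ s, CommRing (R s)] [∀ s, CommRing (R' s)]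
  {K K' : Type*} [CommRing K] [CommRing K'] {π : (∀ s, R s) →+* K} {π' : (∀ s, R' s) →+* K'}

theorem eq_zero_iff (h : IsUltraproduct D π) (f : ∀ s, R s) :
    π f = 0 ↔ ∀ᶠ s in (D : Filter S), f s = 0 := by
  rw [← map_zero π, h.2]
  rfl

noncomputable def map (h : IsUltraproduct D π) (h' : IsUltraproduct D π')
    (φ : ∀ s, R s →+* R' s) : K →+* K' :=
  π.liftOfSurjective h.1
    ⟨π'.comp (RingHom.pi fun s => (φ s).comp (Pi.evalRingHom R s)), fun f hf => by
      rw [RingHom.mem_ker, h.eq_zero_iff] at hf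
      rw [RingHom.mem_ker, RingHom.comp_apply, h'.eq_zero_iff]
      exact hf.mono fun s hs => show φ s (f s) = 0 by rw [hs, map_zero]⟩

theorem map_apply (h : IsUltraproduct D π) (h' : IsUltraproduct D π')
    (φ : ∀ s, R s →+* R' s) (f : ∀ s, R s) :
    h.map h' φ (π f) = π' fun s => φ s (f s) :=
  π.liftOfSurjective_comp_apply h.1 _ f

end Ring

section Algebra

variable {F L : S → Type*} [∀ s, CommRing (F s)] [∀ s, CommRing (L s)]
  [∀ s, Algebra (F s) (L s)] {K M : Type*} [CommRing K] [CommRing M] [Algebra K M]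
  {πF : (∀ s, F s) →+* K} {πL : (∀ s, L s) →+* M}

variable (πF πL) in
abbrev AlgebraMapCompatible : Prop :=
  ∀ f : ∀ s, F s, algebraMap K M (πF f) = πL fun s => algebraMap (F s) (L s) (f s)

theorem sum_smul_eq
    (hcomp : AlgebraMapCompatible πF πL)
    {ι : Type*} [Fintype ι] (c : ι → ∀ s, F s) (b : ι → ∀ s, L s) :
    ∑ i, πF (c i) • πL (b i) = πL fun s => ∑ i, c i s • b i s := by
  simp only [Algebra.smul_def, hcomp, ← map_mul, ← map_sum]
  congr 1
  ext s
  simp [Finset.sum_apply]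

theorem linearIndependent (hF : IsUltraproduct D πF) (hL : IsUltraproduct D πL)
    (hcomp : AlgebraMapCompatible πF πL)
    {ι : Type*} [Fintype ι] (b : ι → ∀ s, L s)
    (hb : ∀ᶠ s in (D : Filter S), LinearIndependent (F s) fun i => b i s) :
    LinearIndependent K fun i => πL (b i) := by
  rw [Fintype.linearIndependent_iff]
  intro c hc i
  choose c' hc' using fun i => hF.1 (c i)
  obtain rfl : c = fun i => πF (c' i) := funext fun i => (hc' i).symm
  rw [sum_smul_eq hcomp, hL.eq_zero_iff] at hc
  rw [hF.eq_zero_iff]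
  exact (hb.and hc).mono fun s ⟨hbs, hcs⟩ => Fintype.linearIndependent_iff.mp hbs _ hcs i

theorem span_eq_top (hL : IsUltraproduct D πL)
    (hcomp : AlgebraMapCompatible πF πL)
    {ι : Type*} [Fintype ι] (b : ι → ∀ s, L s)
    (hb : ∀ᶠ s in (D : Filter S), Submodule.span (F s) (Set.range fun i => b i s) = ⊤) :
    Submodule.span K (Set.range fun i => πL (b i)) = ⊤ := by
  refine eq_top_iff.mpr fun x _ => ?_
  obtain ⟨g, rfl⟩ := hL.1 x
  obtain ⟨c, hc⟩ : ∃ c : ∀ s, ι → F s, ∀ᶠ s in (D : Filter S), ∑ i, c s i • b i s = g s :=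
    Filter.skolem.mp <| hb.mono fun s hs =>
      (Submodule.mem_span_range_iff_exists_fun (F s)).mp (hs ▸ Submodule.mem_top)
  refine (Submodule.mem_span_range_iff_exists_fun K).mpr ⟨fun i => πF fun s => c s i, ?_⟩
  rw [sum_smul_eq hcomp, hL.2]
  exact hc

theorem nonempty_basis (hF : IsUltraproduct D πF) (hL : IsUltraproduct D πL)
    (hcomp : AlgebraMapCompatible πF πL)
    {ι : Type*} [Fintype ι] (hb : ∀ᶠ s in (D : Filter S), Nonempty (Basis ι (F s) (L s))) :
    Nonempty (Basis ι K M) := by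
  obtain ⟨b, hβ⟩ :=
    (Filter.skolem (P := fun s (v : ι → L s) => ∃ β : Basis ι (F s) (L s), ⇑β = v)).mp <|
      hb.mono fun s ⟨β⟩ => ⟨β, β, rfl⟩
  have hli := hF.linearIndependent hL hcomp (fun i s => b s i)
    (hβ.mono fun s ⟨β, hβ⟩ => hβ ▸ β.linearIndependent)
  have hspan := hL.span_eq_top hcomp (fun i s => b s i)
    (hβ.mono fun s ⟨β, hβ⟩ => hβ ▸ β.span_eq)
  exact ⟨Basis.mk hli hspan.ge⟩

noncomputable def algHom (hF : IsUltraproduct D πF) (hL : IsUltraproduct D πL)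
    (hcomp : AlgebraMapCompatible πF πL)
    (σ : ∀ s, L s →ₐ[F s] L s) : M →ₐ[K] M where
  __ := hL.map hL fun s => (σ s).toRingHom
  commutes' r := by
    obtain ⟨f, rfl⟩ := hF.1 r
    simp [hcomp, map_apply]

theorem algHom_apply (hF : IsUltraproduct D πF) (hL : IsUltraproduct D πL)
    (hcomp : AlgebraMapCompatible πF πL)
    (σ : ∀ s, L s →ₐ[F s] L s) (g : ∀ s, L s) :
    hF.algHom hL hcomp σ (πL g) = πL fun s => σ s (g s) :=
  hL.map_apply hL _ g

theorem algHom_ne (hF : IsUltraproduct D πF) (hL : IsUltraproduct D πL)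
    (hcomp : AlgebraMapCompatible πF πL)
    {σ τ : ∀ s, L s →ₐ[F s] L s} (hne : ∀ᶠ s in (D : Filter S), σ s ≠ τ s) :
    hF.algHom hL hcomp σ ≠ hF.algHom hL hcomp τ := by
  obtain ⟨y, hy⟩ := Filter.skolem.mp <| hne.mono fun s hs => DFunLike.ne_iff.mp hs
  intro h
  have hagree := congrArg (fun φ => φ (πL y)) h
  simp only [algHom_apply, hL.2] at hagree
  obtain ⟨s, hs, hs'⟩ := (hy.and hagree).exists
  exact hs hs'

end Algebra

end IsUltraproduct

theorem stmt_3_general {S : Type*} (D : Ultrafilter S)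
    (F L : S → Type*) [∀ s, Field (F s)] [∀ s, Field (L s)] [∀ s, Algebra (F s) (L s)]
    (K M : Type*) [Field K] [Field M] [Algebra K M]
    (πF : (∀ s, F s) →+* K) (πL : (∀ s, L s) →+* M)
    (hF : IsUltraproduct D πF) (hL : IsUltraproduct D πL)
    (hcomp : ∀ f : ∀ s, F s,
      algebraMap K M (πF f) = πL fun s => algebraMap (F s) (L s) (f s))
    (d : ℕ) (hd : 0 < d)
    (hGal : {s | IsGalois (F s) (L s) ∧ Module.finrank (F s) (L s) = d} ∈ D) :
    IsGalois K M ∧ Module.finrank K M = d := by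
  have hGal' : ∀ᶠ s in (D : Filter S),
      IsGalois (F s) (L s) ∧ finrank (F s) (L s) = d ∧ FiniteDimensional (F s) (L s) :=
    Filter.mem_of_superset hGal fun s hs => ⟨hs.1, hs.2, .of_finrank_pos (hs.2 ▸ hd)⟩
  have hrank : finrank K M = d := by
    obtain ⟨b⟩ := hF.nonempty_basis hL hcomp <|
      hGal'.mono fun s ⟨_, hrank, _⟩ => ⟨finBasisOfFinrankEq _ _ hrank⟩
    rw [finrank_eq_card_basis b, Fintype.card_fin]
  have : FiniteDimensional K M := .of_finrank_pos (hrank ▸ hd)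
  obtain ⟨σ, hσ⟩ : ∃ σ : ∀ s, Fin d → (L s →ₐ[F s] L s),
      ∀ᶠ s in (D : Filter S), Function.Injective (σ s) :=
    Filter.skolem.mp <| hGal'.mono fun s ⟨_, hrank, _⟩ =>
      IsGalois.exists_injective_algHom_of_finrank_eq hrank
  refine ⟨IsGalois.of_injective_algHom (fun j => hF.algHom hL hcomp fun s => σ s j)
    (fun i j hij => ?_) (by rw [hrank, Nat.card_fin]), hrank⟩
  by_contra hne
  exact hF.algHom_ne hL hcomp (hσ.mono fun s hs => hs.ne hne) hij

/-- If `L s / F s` is a finite Galois extension of degree `d` for `D`-almost all `s`,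
then the ultraproduct extension `M / K` is Galois of degree `d`. -/
theorem stmt_3 {S : Type*} [Infinite S] (D : Ultrafilter S) (hD : ∀ s : S, D ≠ pure s)
    (F L : S → Type*) [∀ s, Field (F s)] [∀ s, Field (L s)] [∀ s, Algebra (F s) (L s)]
    (K M : Type*) [Field K] [Field M] [Algebra K M]
    (πF : (∀ s, F s) →+* K) (πL : (∀ s, L s) →+* M)
    (hF : IsUltraproduct D πF) (hL : IsUltraproduct D πL)
    (hcomp : ∀ f : ∀ s, F s,
      algebraMap K M (πF f) = πL fun s => algebraMap (F s) (L s) (f s))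
    (d : ℕ) (hd : 0 < d)
    (hGal : {s | IsGalois (F s) (L s) ∧ Module.finrank (F s) (L s) = d} ∈ D) :
    IsGalois K M ∧ Module.finrank K M = d :=
  stmt_3_general D F L K M πF πL hF hL hcomp d hd hGal
end

section
/- Every nonprincipal ultraproduct of finite fields is quasi-finite, i.e., it is perfect and has a unique field extension of each finite degree n ≥ 1. -/
/-- A quasi-finite field: a perfect field with exactly one extension of each finite
degree `n ≥ 1` inside a fixed algebraic closure. -/
def QuasiFinite (K : Type*) [Field K] : Prop :=
  PerfectField K ∧ ∀ n : ℕ, 1 ≤ n →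
    ∃! E : IntermediateField K (AlgebraicClosure K), Module.finrank K ↥E = n

/-!
Everything needed transfers from the components by Łoś-type arguments on coefficients.
Frobenius is onto in almost every component, so `K` is perfect. A monic polynomial over `K`
lifts to the product, and it is irreducible iff almost all of its components are, because
reducibility is a factorisation into two factors of smaller degree.

Each `F s` has a monic irreducible `p_s` of degree `n`; let `α` be a root of the image `f`
of the family `(p_s)`, so `[K(α) : K] = n`. If `E` has degree `n` and `β ∈ E`, the minimal
polynomial `g` of `β` lifts to a family `r_s`, almost all irreducible of degree dividing `n`.
Over a finite field such an `r_s` splits in `F s[Y]/(p_s)`, that is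
`r_s(X) ≡ ∏ⱼ (X - u_{s,j}(Y)) mod p_s(Y)` coefficientwise with `deg u_{s,j} ≤ n`. This bounded
statement transfers to `g(X) ≡ ∏ⱼ (X - uⱼ(Y)) mod f(Y)`, and evaluating at `Y = α`, `X = β`
gives `β = uⱼ(α) ∈ K(α)` for some `j`. Hence `E ≤ K(α)`, and the degrees force equality.
-/

open Polynomial

namespace Polynomial

theorem not_irreducible_iff_exists_mul_eq_natDegree_lt {L : Type*} [Field L] {p : L[X]}
    (hp : 0 < p.natDegree) :
    ¬ Irreducible p ↔
      ∃ g h : L[X], g.natDegree < p.natDegree ∧ h.natDegree < p.natDegree ∧ p = g * h := by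
  have hp0 : p ≠ 0 := ne_zero_of_natDegree_gt hp
  constructor
  · intro hirr
    simp only [irreducible_iff, not_and, not_forall, not_or] at hirr
    obtain ⟨g, h, rfl, hg, hh⟩ := hirr (not_isUnit_of_natDegree_pos _ hp)
    have hg0 : g ≠ 0 := left_ne_zero_of_mul hp0
    have hh0 : h ≠ 0 := right_ne_zero_of_mul hp0
    have hg' := natDegree_pos_iff_degree_pos.2 (degree_pos_of_ne_zero_of_nonunit hg0 hg)
    have hh' := natDegree_pos_iff_degree_pos.2 (degree_pos_of_ne_zero_of_nonunit hh0 hh)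
    refine ⟨g, h, ?_, ?_, rfl⟩ <;> rw [natDegree_mul hg0 hh0] <;> omega
  · rintro ⟨g, h, hg, hh, rfl⟩ hirr
    have hg0 : g ≠ 0 := left_ne_zero_of_mul hp0
    have hh0 : h ≠ 0 := right_ne_zero_of_mul hp0
    rw [natDegree_mul hg0 hh0] at hg hh
    rcases hirr.isUnit_or_isUnit rfl with hu | hu
    · rw [natDegree_eq_zero_of_isUnit hu] at hh; omega
    · rw [natDegree_eq_zero_of_isUnit hu] at hg; omega

theorem Monic.not_irreducible_map_iff {A L : Type*} [CommRing A] [Field L] {P : A[X]}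
    (hP : P.Monic) (hn : 0 < P.natDegree) (φ : A →+* L) :
    ¬ Irreducible (P.map φ) ↔ ∃ g h : L[X], g.natDegree ≤ P.natDegree - 1 ∧
      h.natDegree ≤ P.natDegree - 1 ∧ P.map φ = g * h := by
  rw [not_irreducible_iff_exists_mul_eq_natDegree_lt (by rwa [hP.natDegree_map]),
    hP.natDegree_map]
  simp only [Nat.le_sub_one_iff_lt hn]

theorem Splits.exists_eq_prod_fin {L : Type*} [Field L] {f : L[X]} (hf : f.Splits)
    (hm : f.Monic) {d : ℕ} (hd : f.natDegree = d) :
    ∃ v : Fin d → L, f = ∏ j, (X - C (v j)) := by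
  obtain ⟨l, hl⟩ : ∃ l : List L, f.roots = l := ⟨f.roots.toList, (Multiset.coe_toList _).symm⟩
  have hlen : l.length = d := by
    rw [← hd, hf.natDegree_eq_card_roots, hl, Multiset.coe_card]
  subst hlen
  refine ⟨fun j => l[j], ?_⟩
  rw [hf.eq_prod_roots_of_monic hm, hl, Multiset.map_coe, Multiset.prod_coe]
  exact (Fin.prod_univ_fun_getElem l _).symm

theorem map_coeff_sub_prod {A B : Type*} [CommRing A] [CommRing B] (φ : A →+* B)
    (r : A[X]) {d : ℕ} (u : Fin d → A[X]) (k : ℕ) :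
    ((r.map C - ∏ j, (X - C (u j))).coeff k).map φ =
      ((r.map φ).map C - ∏ j, (X - C ((u j).map φ))).coeff k := by
  have hC : (mapRingHom φ).comp C = C.comp φ := by ext; simp
  rw [← coe_mapRingHom, ← coeff_map]
  simp [Polynomial.map_map, Polynomial.map_prod, hC]

section Pi

variable {S : Type*} {R : S → Type*} [∀ s, CommRing (R s)]

theorem exists_map_evalRingHom_eq (q : ∀ s, (R s)[X]) (N : ℕ) :
    ∃ Q : (∀ s, R s)[X], Q.natDegree ≤ N ∧
      ∀ s, (q s).natDegree ≤ N → Q.map (Pi.evalRingHom R s) = q s := by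
  refine ⟨∑ k ∈ Finset.range (N + 1), monomial k (fun s => (q s).coeff k), ?_, fun s hs => ?_⟩
  · refine natDegree_sum_le_of_forall_le _ _ fun k hk => ?_
    exact (natDegree_monomial_le _).trans (Nat.lt_succ_iff.1 (Finset.mem_range.1 hk))
  · rw [Polynomial.map_sum]
    simp only [map_monomial, Pi.evalRingHom_apply]
    exact (as_sum_range' (q s) (N + 1) (Nat.lt_succ_of_le hs)).symm

theorem exists_monic_map_evalRingHom_eq [Nontrivial (∀ s, R s)] (q : ∀ s, (R s)[X]) {n : ℕ}
    (hq : ∀ s, (q s).Monic) (hn : ∀ s, (q s).natDegree = n) :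
    ∃ Q : (∀ s, R s)[X], Q.Monic ∧ Q.natDegree = n ∧ ∀ s, Q.map (Pi.evalRingHom R s) = q s := by
  obtain ⟨Q, hQn, hQ⟩ := exists_map_evalRingHom_eq q n
  have hQ' s : Q.map (Pi.evalRingHom R s) = q s := hQ s (hn s).le
  have hcoeff : Q.coeff n = 1 := by
    ext s
    rw [← Pi.evalRingHom_apply R s (Q.coeff n), ← coeff_map, hQ', ← hn s]
    exact (hq s).coeff_natDegree
  exact ⟨Q, monic_of_natDegree_le_of_coeff_eq_one n hQn hcoeff,
    natDegree_eq_of_le_of_coeff_ne_zero hQn (by simp [hcoeff]), hQ'⟩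

end Pi

end Polynomial

theorem exists_prod_dvd_of_splits_map_adjoinRoot {L : Type*} [Field L] {p r : L[X]}
    [Fact (Irreducible p)] (hp : p.Monic) (hr : r.Monic)
    (hs : (r.map (AdjoinRoot.of p)).Splits) {d : ℕ} (hd : r.natDegree = d) :
    ∃ u : Fin d → L[X], (∀ j, (u j).natDegree ≤ p.natDegree) ∧
      ∀ k, p ∣ (r.map C - ∏ j, (X - C (u j))).coeff k := by
  obtain ⟨v, hv⟩ := hs.exists_eq_prod_fin (hr.map _) (by rw [natDegree_map, hd])
  refine ⟨fun j => AdjoinRoot.modByMonicHom hp (v j), fun j => ?_, fun k => ?_⟩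
  · obtain ⟨w, hw⟩ := AdjoinRoot.mk_surjective (v j)
    simp only [← hw, AdjoinRoot.modByMonicHom_mk]
    exact natDegree_modByMonic_le _ hp
  · have hZ : (r.map C - ∏ j, (X - C (AdjoinRoot.modByMonicHom hp (v j)))).map
        (AdjoinRoot.mk p) = 0 := by
      have hC : (AdjoinRoot.mk p).comp C = AdjoinRoot.of p := rfl
      simp [Polynomial.map_map, Polynomial.map_prod, AdjoinRoot.mk_leftInverse hp _, hC, hv]
    rw [← AdjoinRoot.mk_eq_zero, ← coeff_map, hZ, coeff_zero]

open IntermediateField in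
theorem mem_adjoin_simple_of_dvd_coeff_sub_prod {K L : Type*} [Field K] [Field L] [Algebra K L]
    {α β : L} {f g : K[X]} {d : ℕ} {u : Fin d → K[X]} (hα : aeval α f = 0)
    (hβ : aeval β g = 0) (h : ∀ k, f ∣ (g.map C - ∏ j, (X - C (u j))).coeff k) :
    β ∈ K⟮α⟯ := by
  have hZ : (g.map C - ∏ j, (X - C (u j))).map (aeval α).toRingHom = 0 := by
    ext k
    obtain ⟨c, hc⟩ := h k
    rw [coeff_map, hc, coeff_zero, AlgHom.toRingHom_eq_coe, RingHom.coe_coe, map_mul, hα,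
      zero_mul]
  have hC : ((aeval α : K[X] →ₐ[K] L) : K[X] →+* L).comp C = algebraMap K L := by ext; simp
  have hsplit : g.map (algebraMap K L) = ∏ j, (X - C (aeval α (u j))) := by
    simpa [Polynomial.map_map, Polynomial.map_prod, sub_eq_zero, hC] using hZ
  have hroot : eval β (∏ j, (X - C (aeval α (u j)))) = 0 := by
    rw [← hsplit, eval_map_algebraMap, hβ]
  obtain ⟨j, -, hj⟩ := Finset.prod_eq_zero_iff.1 (eval_prod _ _ β ▸ hroot)
  rw [eval_sub, eval_X, eval_C, sub_eq_zero] at hj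
  rw [hj]
  exact algebra_adjoin_le_adjoin K {α} (aeval_mem_adjoin_singleton K α)

namespace FiniteField

variable {L : Type*} [Field L] [Finite L]

variable (L) in
theorem exists_monic_irreducible_natDegree_eq {n : ℕ} (hn : n ≠ 0) :
    ∃ p : L[X], p.Monic ∧ Irreducible p ∧ p.natDegree = n := by
  obtain ⟨p, _⟩ := CharP.exists L
  have := Fact.mk (CharP.char_is_prime L p)
  have := NeZero.mk hn
  let pb := Field.powerBasisOfFiniteOfSeparable L (Extension L p n)
  exact ⟨minpoly L pb.gen, minpoly.monic pb.isIntegral_gen, minpoly.irreducible pb.isIntegral_gen,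
    by rw [pb.natDegree_minpoly, ← pb.finrank, finrank_extension]⟩

theorem splits_map_adjoinRoot_of_natDegree_dvd {p r : L[X]} [Fact (Irreducible p)]
    (hr : r.Monic) (hirr : Irreducible r) (hdvd : r.natDegree ∣ p.natDegree) :
    (r.map (AdjoinRoot.of p)).Splits := by
  have := Fact.mk hirr
  have hp0 : p ≠ 0 := (Fact.out : Irreducible p).ne_zero
  have := (AdjoinRoot.powerBasis hp0).finite
  have := Module.finite_of_finite L (M := AdjoinRoot p)
  obtain ⟨φ⟩ := nonempty_algHom_of_finrank_dvd (F := L) (K := AdjoinRoot r) (L := AdjoinRoot p)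
    (by rwa [(AdjoinRoot.powerBasis hr.ne_zero).finrank, (AdjoinRoot.powerBasis hp0).finrank])
  have hmin : minpoly L (φ (AdjoinRoot.root r)) = r := by
    refine (minpoly.eq_of_irreducible_of_monic hirr ?_ hr).symm
    rw [Polynomial.aeval_algHom_apply, AdjoinRoot.aeval_eq, AdjoinRoot.mk_self, map_zero]
  rw [← hmin]
  exact Normal.splits inferInstance _

end FiniteField

namespace IsUltraproduct

open IntermediateField

section CommRing

variable {S : Type*} {R : S → Type*} [∀ s, CommRing (R s)] {K : Type*} [CommRing K]
  {D : Ultrafilter S} {π : (∀ s, R s) →+* K}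

theorem map_eq_map_iff (hπ : IsUltraproduct D π) {P Q : (∀ s, R s)[X]} :
    P.map π = Q.map π ↔
      ∀ᶠ s in D, P.map (Pi.evalRingHom R s) = Q.map (Pi.evalRingHom R s) := by
  classical
  simp only [Polynomial.ext_iff, coeff_map, hπ.2, Pi.evalRingHom_apply]
  refine ⟨fun h => ?_, fun h k => h.mono fun s hs => hs k⟩
  filter_upwards [(Filter.eventually_all_finset (P.support ∪ Q.support)).2 fun k _ => h k]
    with s hs k
  by_cases hk : k ∈ P.support ∪ Q.support
  · exact hs k hk
  · simp only [Finset.mem_union, mem_support_iff, not_or, not_not] at hk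
    rw [hk.1, hk.2]

theorem map_dvd_map_of_eventually (hπ : IsUltraproduct D π) {P Q : (∀ s, R s)[X]}
    (hP : P.Monic) (h : ∀ᶠ s in D, P.map (Pi.evalRingHom R s) ∣ Q.map (Pi.evalRingHom R s)) :
    P.map π ∣ Q.map π := by
  -- divisibility by a monic polynomial is the vanishing of the remainder, which commutes with `map`
  rw [← modByMonic_eq_zero_iff_dvd (hP.map π), ← map_modByMonic π hP, ← Polynomial.map_zero π,
    hπ.map_eq_map_iff]
  filter_upwards [h] with s hs
  rwa [map_modByMonic _ hP, Polynomial.map_zero, modByMonic_eq_zero_iff_dvd (hP.map _)]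

theorem exists_mul_eq_map_iff (hπ : IsUltraproduct D π) (P : (∀ s, R s)[X]) (N : ℕ) :
    (∃ g h : K[X], g.natDegree ≤ N ∧ h.natDegree ≤ N ∧ P.map π = g * h) ↔
      ∀ᶠ s in D, ∃ g h : (R s)[X], g.natDegree ≤ N ∧ h.natDegree ≤ N ∧
        P.map (Pi.evalRingHom R s) = g * h := by
  constructor
  · rintro ⟨g, h, hg, hh, hgh⟩
    obtain ⟨G, rfl, hG⟩ := exists_natDegree_eq_of_mem_lifts (map_surjective π hπ.1 g)
    obtain ⟨H, rfl, hH⟩ := exists_natDegree_eq_of_mem_lifts (map_surjective π hπ.1 h)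
    rw [← Polynomial.map_mul, hπ.map_eq_map_iff] at hgh
    filter_upwards [hgh] with s hs
    exact ⟨G.map _, H.map _, natDegree_map_le.trans (hG ▸ hg),
      natDegree_map_le.trans (hH ▸ hh), by rw [hs, Polynomial.map_mul]⟩
  · intro h
    obtain ⟨g, hg⟩ := Filter.skolem.1 h
    obtain ⟨h, hgh⟩ := Filter.skolem.1 hg
    obtain ⟨G, hGN, hG⟩ := exists_map_evalRingHom_eq g N
    obtain ⟨H, hHN, hH⟩ := exists_map_evalRingHom_eq h N
    refine ⟨G.map π, H.map π, natDegree_map_le.trans hGN, natDegree_map_le.trans hHN, ?_⟩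
    rw [← Polynomial.map_mul, hπ.map_eq_map_iff]
    filter_upwards [hgh] with s ⟨hg, hh, hs⟩
    rw [hs, Polynomial.map_mul, hG s hg, hH s hh]

theorem exists_prod_dvd_of_eventually (hπ : IsUltraproduct D π) {P Q : (∀ s, R s)[X]}
    (hP : P.Monic) {d N : ℕ}
    (h : ∀ᶠ s in D, ∃ u : Fin d → (R s)[X], (∀ j, (u j).natDegree ≤ N) ∧
      ∀ k, P.map (Pi.evalRingHom R s) ∣
        ((Q.map (Pi.evalRingHom R s)).map C - ∏ j, (X - C (u j))).coeff k) :
    ∃ u : Fin d → K[X], ∀ k, P.map π ∣ ((Q.map π).map C - ∏ j, (X - C (u j))).coeff k := by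
  obtain ⟨u, hu⟩ := Filter.skolem.1 h
  choose U hUN hU using fun j => exists_map_evalRingHom_eq (fun s => u s j) N
  refine ⟨fun j => (U j).map π, fun k => ?_⟩
  rw [← map_coeff_sub_prod]
  refine hπ.map_dvd_map_of_eventually hP ?_
  filter_upwards [hu] with s ⟨huN, hus⟩
  rw [map_coeff_sub_prod]
  simpa only [hU _ s (huN _)] using hus k

end CommRing

variable {S : Type*} {F : S → Type*} [∀ s, Field (F s)] {K : Type*} [Field K]
  {D : Ultrafilter S} {π : (∀ s, F s) →+* K}

theorem irreducible_map_iff (hπ : IsUltraproduct D π) {P : (∀ s, F s)[X]} (hP : P.Monic) :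
    Irreducible (P.map π) ↔ ∀ᶠ s in D, Irreducible (P.map (Pi.evalRingHom F s)) := by
  rcases Nat.eq_zero_or_pos P.natDegree with h0 | hn
  · simp [hP.natDegree_eq_zero.1 h0, D.neBot.ne]
  rw [← not_iff_not, hP.not_irreducible_map_iff hn, ← Ultrafilter.eventually_not]
  simp only [hP.not_irreducible_map_iff hn]
  exact hπ.exists_mul_eq_map_iff P _

variable [∀ s, Finite (F s)]

theorem frobenius_surjective (hπ : IsUltraproduct D π) (p : ℕ) [Fact p.Prime] [CharP K p] :
    Function.Surjective (frobenius K p) := by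
  intro a
  obtain ⟨f, rfl⟩ := hπ.1 a
  have hchar : ∀ᶠ s in D, CharP (F s) p := by
    have : π (p : ∀ s, F s) = π 0 := by simp
    filter_upwards [(hπ.2 _ _).1 this] with s hs
    exact (CharP.charP_iff_prime_eq_zero Fact.out).2 (by simpa using hs)
  have hroot : ∀ᶠ s in D, ∃ b : F s, b ^ p = f s :=
    hchar.mono fun s _ => surjective_frobenius (F s) p (f s)
  obtain ⟨b, hb⟩ := Filter.skolem.1 hroot
  exact ⟨π b, by rw [frobenius_def, ← map_pow]; exact (hπ.2 _ _).2 hb⟩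

theorem perfectField (hπ : IsUltraproduct D π) : PerfectField K := by
  obtain ⟨p, _⟩ := CharP.exists K
  rcases CharP.char_is_prime_or_zero K p with hp | rfl
  · have := Fact.mk hp
    have := PerfectRing.ofSurjective K p (hπ.frobenius_surjective p)
    exact PerfectRing.toPerfectField K p
  · have := CharP.charP_to_charZero K
    infer_instance

theorem mem_adjoin_simple_of_natDegree_minpoly_dvd (hπ : IsUltraproduct D π)
    {P : (∀ s, F s)[X]} (hP : P.Monic) (hirr : ∀ᶠ s in D, Irreducible (P.map (Pi.evalRingHom F s)))
    {L : Type*} [Field L] [Algebra K L] {α β : L} (hα : aeval α (P.map π) = 0)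
    (hβ : IsIntegral K β) (hdvd : (minpoly K β).natDegree ∣ P.natDegree) : β ∈ K⟮α⟯ := by
  obtain ⟨Q, hQ, hQdeg, hQm⟩ := lifts_and_natDegree_eq_and_monic
    (map_surjective π hπ.1 (minpoly K β)) (minpoly.monic hβ)
  have hQirr := (hπ.irreducible_map_iff hQm).1 (hQ ▸ minpoly.irreducible hβ)
  have hsplit : ∀ᶠ s in D, ∃ u : Fin (minpoly K β).natDegree → (F s)[X],
      (∀ j, (u j).natDegree ≤ P.natDegree) ∧ ∀ k, P.map (Pi.evalRingHom F s) ∣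
        ((Q.map (Pi.evalRingHom F s)).map C - ∏ j, (X - C (u j))).coeff k := by
    filter_upwards [hirr, hQirr] with s hPs hQs
    have := Fact.mk hPs
    rw [← hP.natDegree_map (Pi.evalRingHom F s)]
    refine exists_prod_dvd_of_splits_map_adjoinRoot (hP.map _) (hQm.map _) ?_
      (by rw [hQm.natDegree_map, hQdeg])
    refine FiniteField.splits_map_adjoinRoot_of_natDegree_dvd (hQm.map _) hQs ?_
    rwa [hP.natDegree_map, hQm.natDegree_map, hQdeg]
  obtain ⟨u, hu⟩ := hπ.exists_prod_dvd_of_eventually hP hsplit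
  rw [hQ] at hu
  exact mem_adjoin_simple_of_dvd_coeff_sub_prod hα (minpoly.aeval K β) hu

theorem existsUnique_finrank_eq (hπ : IsUltraproduct D π) {n : ℕ} (hn : n ≠ 0) :
    ∃! E : IntermediateField K (AlgebraicClosure K), Module.finrank K E = n := by
  have := π.domain_nontrivial
  choose q hqm hqirr hqdeg using
    fun s => FiniteField.exists_monic_irreducible_natDegree_eq (F s) hn
  obtain ⟨P, hP, hPdeg, hPq⟩ := exists_monic_map_evalRingHom_eq q hqm hqdeg
  have hirr : ∀ᶠ s in D, Irreducible (P.map (Pi.evalRingHom F s)) :=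
    .of_forall fun s => hPq s ▸ hqirr s
  have hf := (hπ.irreducible_map_iff hP).2 hirr
  obtain ⟨α, hα⟩ :=
    IsAlgClosed.exists_aeval_eq_zero (AlgebraicClosure K) _ (degree_pos_of_irreducible hf).ne'
  have hαint := Algebra.IsIntegral.isIntegral (R := K) α
  have hfin : Module.finrank K K⟮α⟯ = n := by
    rw [adjoin.finrank hαint, ← minpoly.eq_of_irreducible_of_monic hf hα (hP.map π),
      hP.natDegree_map, hPdeg]
  have := adjoin.finiteDimensional hαint
  refine ⟨K⟮α⟯, hfin, fun E hE => eq_of_le_of_finrank_eq (fun β hβ => ?_) (hE.trans hfin.symm)⟩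
  have hβint := Algebra.IsIntegral.isIntegral (R := K) β
  refine hπ.mem_adjoin_simple_of_natDegree_minpoly_dvd hP hirr hα hβint ?_
  rw [hPdeg, ← hE, ← adjoin.finrank hβint]
  exact finrank_dvd_of_le_right (adjoin_simple_le_iff.2 hβ)

end IsUltraproduct

theorem stmt_6_general {S : Type*} (D : Ultrafilter S)
    (F : S → Type*) [∀ s, Field (F s)] [∀ s, Finite (F s)] (K : Type*) [Field K]
    (π : (∀ s, F s) →+* K) (hπ : IsUltraproduct D π) :
    QuasiFinite K :=
  ⟨hπ.perfectField, fun _ hn => hπ.existsUnique_finrank_eq (Nat.one_le_iff_ne_zero.1 hn)⟩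

/-- Every nonprincipal ultraproduct of finite fields is quasi-finite. -/
theorem stmt_6 {S : Type*} [Infinite S] (D : Ultrafilter S) (hD : ∀ s : S, D ≠ pure s)
    (F : S → Type*) [∀ s, Field (F s)] [∀ s, Finite (F s)] (K : Type*) [Field K]
    (π : (∀ s, F s) →+* K) (hπ : IsUltraproduct D π) :
    QuasiFinite K :=
  stmt_6_general D F K π hπ
end

section
/- Let F_s = k_s(t) be rational function fields over fields k_s, let K = ∏_{s∈S} k_s / D, F = K(t), and let U(F) = ∏_{s∈S} F_s / D be the ultra-hull of F. Then a polynomial P ∈ F[x] is irreducible over F if and only if P is irreducible over U(F). -/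
open Polynomial

namespace Polynomial

section Lifts

variable {R K : Type*} [CommRing R] [IsIntegrallyClosed R] [Field K] [Algebra R K]
  [IsFractionRing R K]

theorem Monic.mem_lifts_of_dvd {P A : K[X]} (hP : P.Monic) (hPR : P ∈ lifts (algebraMap R K))
    (hA : A.Monic) (hAP : A ∣ P) : A ∈ lifts (algebraMap R K) := by
  obtain ⟨Q, hQP, -, hQ⟩ := lifts_and_natDegree_eq_and_monic hPR hP
  obtain ⟨A', hA'⟩ := IsIntegrallyClosed.eq_map_mul_C_of_dvd K hQ (hQP ▸ hAP)
  rw [hA.leadingCoeff, C_1, mul_one] at hA'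
  exact ⟨A', hA'⟩

theorem Monic.coeff_mul_pow_mem_range_of_dvd {P A : K[X]} (hP : P.Monic) (hA : A.Monic)
    (hAP : A ∣ P) {c : K} (hc : c ∈ Set.range (algebraMap R K))
    (hPc : ∀ i, P.coeff i * c ∈ Set.range (algebraMap R K)) (j : ℕ) :
    A.coeff j * c ^ (A.natDegree - j) ∈ Set.range (algebraMap R K) := by
  rw [← coeff_scaleRoots]
  refine (lifts_iff_coeff_lifts _).mp ?_ j
  refine ((monic_scaleRoots_iff c).mpr hP).mem_lifts_of_dvd ?_ ((monic_scaleRoots_iff c).mpr hA)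
    (scaleRoots_dvd _ _ hAP)
  refine (lifts_iff_coeff_lifts _).mpr fun i => ?_
  rw [coeff_scaleRoots]
  rcases lt_trichotomy i P.natDegree with hi | rfl | hi
  · obtain ⟨m, hm⟩ := Nat.exists_eq_add_of_lt hi
    rw [hm, add_assoc, Nat.add_sub_cancel_left, pow_succ', ← mul_assoc]
    exact (algebraMap R K).range.mul_mem (hPc i) ((algebraMap R K).range.pow_mem hc m)
  · exact ⟨1, by rw [hP.coeff_natDegree, one_mul, map_one, Nat.sub_self, pow_zero]⟩
  · exact ⟨0, by rw [coeff_eq_zero_of_natDegree_lt hi, zero_mul, map_zero]⟩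

end Lifts

variable {F L : Type*} [Field F] [Field L]

theorem Monic.irreducible_map_iff_of_forall_dvd_mem_lifts (ι : F →+* L) {P : F[X]} (hP : P.Monic)
    (h : ∀ A : L[X], A.Monic → A ∣ P.map ι → A ∈ lifts ι) :
    Irreducible (P.map ι) ↔ Irreducible P := by
  rw [hP.irreducible_iff_natDegree, (hP.map ι).irreducible_iff_natDegree,
    Ne, ← Polynomial.map_one ι, (map_injective ι ι.injective).eq_iff]
  refine and_congr_right fun _ => ⟨fun hL A B hA hB hAB => ?_, fun hF A B hA hB hAB => ?_⟩
  · simpa [natDegree_map_eq_of_injective ι.injective] using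
      hL (A.map ι) (B.map ι) (hA.map ι) (hB.map ι) (by rw [← Polynomial.map_mul, hAB])
  · obtain ⟨A₀, rfl, hA₀, hA₀m⟩ :=
      lifts_and_natDegree_eq_and_monic (h A hA ⟨B, hAB.symm⟩) hA
    obtain ⟨B₀, rfl, hB₀, hB₀m⟩ :=
      lifts_and_natDegree_eq_and_monic (h B hB ⟨_, (hAB.symm.trans (mul_comm _ _))⟩) hB
    rw [← hA₀, ← hB₀]
    exact hF A₀ B₀ hA₀m hB₀m
      (map_injective ι ι.injective (by rw [Polynomial.map_mul, hAB]))

theorem irreducible_map_iff_of_forall_dvd_mem_lifts (ι : F →+* L)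
    (h : ∀ P : F[X], P.Monic → ∀ A : L[X], A.Monic → A ∣ P.map ι → A ∈ lifts ι)
    (P : F[X]) :
    Irreducible (P.map ι) ↔ Irreducible P := by
  rcases eq_or_ne P 0 with rfl | hP0
  · simp
  have hmonic := monic_mul_leadingCoeff_inv hP0
  rw [← irreducible_mul_leadingCoeff_inv (p := P), ← irreducible_mul_leadingCoeff_inv,
    ← hmonic.irreducible_map_iff_of_forall_dvd_mem_lifts ι (h _ hmonic)]
  simp [leadingCoeff_map]

end Polynomial

namespace RatFunc

variable {κ : Type*} [Field κ]

theorem mem_inftyValuation_integer_iff [DecidableEq (RatFunc κ)] (x : RatFunc κ) :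
    x ∈ (inftyValuation κ).integer ↔ x = 0 ∨ x.intDegree ≤ 0 := by
  rcases eq_or_ne x 0 with rfl | hx
  · simp
  simp [Valuation.mem_integer_iff, inftyValuation_apply, hx, ← WithZero.exp_zero]

theorem intDegree_coeff_le_of_monic_dvd {P A : (RatFunc κ)[X]} (hP : P.Monic) (hA : A.Monic)
    (hAP : A ∣ P) {M : ℕ} (hPM : ∀ i, P.coeff i ≠ 0 → (P.coeff i).intDegree ≤ M)
    {j : ℕ} (hj : A.coeff j ≠ 0) : (A.coeff j).intDegree ≤ M * (A.natDegree - j : ℕ) := by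
  classical
  have hX : algebraMap κ[X] (RatFunc κ) (Polynomial.X ^ M) ≠ 0 := by simp [X_ne_zero]
  set c := (algebraMap κ[X] (RatFunc κ) (Polynomial.X ^ M))⁻¹
  have hc0 : c ≠ 0 := inv_ne_zero hX
  have hcdeg (m : ℕ) : (c ^ m).intDegree = -(M * m : ℕ) := by
    rw [inv_pow, intDegree_inv, ← map_pow, intDegree_polynomial, ← pow_mul, natDegree_X_pow]
  have hrange (x : RatFunc κ) :
      x ∈ Set.range (algebraMap (inftyValuation κ).integer (RatFunc κ)) ↔
        x = 0 ∨ x.intDegree ≤ 0 := by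
    rw [← mem_inftyValuation_integer_iff]
    exact ⟨by rintro ⟨y, rfl⟩; exact y.2, fun hx => ⟨⟨x, hx⟩, rfl⟩⟩
  have hAc := hP.coeff_mul_pow_mem_range_of_dvd (R := (inftyValuation κ).integer) hA hAP
    ((hrange c).mpr (Or.inr (by rw [← pow_one c, hcdeg]; omega)))
    (fun i => (hrange _).mpr <| by
      rcases eq_or_ne (P.coeff i) 0 with hi | hi
      · simp [hi]
      · have hPi := hPM i hi
        rw [intDegree_mul hi hc0, ← pow_one c, hcdeg]
        omega) j
  rw [hrange, intDegree_mul hj (pow_ne_zero _ hc0), hcdeg] at hAc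
  rcases hAc with h0 | hle
  · exact absurd h0 (mul_ne_zero hj (pow_ne_zero _ hc0))
  · push_cast at hle ⊢
    omega

theorem exists_coeff_mul_pow_eq_algebraMap {P A : (RatFunc κ)[X]} (hP : P.Monic) (hA : A.Monic)
    (hAP : A ∣ P) {g : κ[X]} (hg : g ≠ 0) {M : ℕ} (hgM : g.natDegree ≤ M)
    (hPg : ∀ i, ∃ f : κ[X], f.natDegree ≤ M ∧
      P.coeff i * algebraMap κ[X] (RatFunc κ) g = algebraMap κ[X] (RatFunc κ) f) (j : ℕ) :
    ∃ u : κ[X], u.natDegree ≤ 2 * A.natDegree * M ∧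
      A.coeff j * algebraMap κ[X] (RatFunc κ) (g ^ A.natDegree) =
        algebraMap κ[X] (RatFunc κ) u := by
  rcases eq_or_ne (A.coeff j) 0 with hj | hj
  · exact ⟨0, by simp, by simp [hj]⟩
  have hjd : j ≤ A.natDegree := le_natDegree_of_ne_zero hj
  have hg' : algebraMap κ[X] (RatFunc κ) g ≠ 0 := by simpa using hg
  obtain ⟨p, hp⟩ := hP.coeff_mul_pow_mem_range_of_dvd hA hAP ⟨g, rfl⟩
    (fun i => (hPg i).imp fun f hf => hf.2.symm) j
  have hbound := intDegree_coeff_le_of_monic_dvd hP hA hAP (M := M) (fun i hi => by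
    obtain ⟨f, hfM, hf⟩ := hPg i
    have hdeg := congrArg intDegree hf
    rw [intDegree_mul hi hg', intDegree_polynomial, intDegree_polynomial] at hdeg
    omega) hj
  have hp0 : p ≠ 0 := by
    rintro rfl
    exact mul_ne_zero hj (pow_ne_zero _ hg') (by simpa using hp.symm)
  have hpdeg : (p.natDegree : ℤ) =
      (A.coeff j).intDegree + (A.natDegree - j : ℕ) * g.natDegree := by
    rw [← intDegree_polynomial, hp, intDegree_mul hj (pow_ne_zero _ hg'), ← map_pow,
      intDegree_polynomial, natDegree_pow]
    push_cast; ring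
  refine ⟨p * g ^ j, ?_, ?_⟩
  · rw [natDegree_mul hp0 (pow_ne_zero _ hg), natDegree_pow]
    have : (A.natDegree - j : ℕ) + j = A.natDegree := Nat.sub_add_cancel hjd
    zify at hgM this ⊢
    nlinarith
  · rw [map_mul, hp, map_pow, map_pow, mul_assoc, ← pow_add, Nat.sub_add_cancel hjd]

end RatFunc

namespace IsUltraproduct

variable {S : Type*} {R : S → Type*} [∀ s, CommRing (R s)] {T : Type*} [CommRing T]
  {D : Ultrafilter S} {π : (∀ s, R s) →+* T}

theorem ne_zero_iff_eventually (h : IsUltraproduct D π) (f : ∀ s, R s) :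
    π f ≠ 0 ↔ ∀ᶠ s in D, f s ≠ 0 := by
  rw [Ne, ← map_zero π, h.2, ← Ultrafilter.compl_mem_iff_notMem]
  rfl

end IsUltraproduct

theorem exists_lift_common_denominator {R K : Type*} [CommRing R] [Field K] {φ : R →+* K}
    (hφ : Function.Surjective φ) (P : (RatFunc K)[X]) :
    ∃ (g : R[X]) (f : ℕ → R[X]) (M : ℕ), g.map φ ≠ 0 ∧ g.natDegree ≤ M ∧
      (∀ i, (f i).natDegree ≤ M) ∧
      ∀ i, P.coeff i * algebraMap K[X] (RatFunc K) (g.map φ) =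
        algebraMap K[X] (RatFunc K) ((f i).map φ) := by
  obtain ⟨b, hb, hQ⟩ := IsLocalization.integerNormalization_spec (nonZeroDivisors K[X]) P
  obtain ⟨g, rfl⟩ := map_surjective φ hφ b
  obtain ⟨Q, hQ'⟩ := map_surjective (mapRingHom φ) (map_surjective φ hφ)
    (IsLocalization.integerNormalization (nonZeroDivisors K[X]) P)
  refine ⟨g, Q.coeff, g.natDegree ⊔ Q.support.sup fun i => (Q.coeff i).natDegree,
    nonZeroDivisors.ne_zero hb, le_sup_left, fun i => ?_, fun i => ?_⟩
  · by_cases hi : i ∈ Q.support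
    · exact le_sup_of_le_right (Finset.le_sup (f := fun i => (Q.coeff i).natDegree) hi)
    · simp [notMem_support_iff.mp hi]
  · have hcoeff := congrArg (coeff · i) hQ
    rw [coeff_map, coeff_smul, Algebra.smul_def, ← hQ', coeff_map, coe_mapRingHom] at hcoeff
    rw [mul_comm, ← hcoeff]

section UltraHull

variable {S : Type*} {k : S → Type*} [∀ s, Field (k s)] {K : Type*} [Field K]
  {D : Ultrafilter S} {πK : (∀ s, k s) →+* K} {UF : Type*} [Field UF]
  {πF : (∀ s, RatFunc (k s)) →+* UF} {ι : RatFunc K →+* UF}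

theorem apply_algebraMap_map_eq
    (hιC : ∀ f : ∀ s, k s, ι (RatFunc.C (πK f)) = πF fun s => RatFunc.C (f s))
    (hιX : ι RatFunc.X = πF fun _ => RatFunc.X) (q : (∀ s, k s)[X]) :
    ι (algebraMap K[X] (RatFunc K) (q.map πK)) =
      πF fun s => algebraMap (k s)[X] (RatFunc (k s)) (q.map (Pi.evalRingHom k s)) := by
  refine RingHom.congr_fun (f := ι.comp ((algebraMap _ _).comp (mapRingHom πK)))
    (g := πF.comp (RingHom.pi fun s =>
      (algebraMap _ (RatFunc (k s))).comp (mapRingHom (Pi.evalRingHom k s))))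
    (ringHom_ext (fun a => ?_) ?_) q
  · simp only [RingHom.comp_apply, coe_mapRingHom, map_C, RatFunc.algebraMap_C, hιC]
    congr 1
    funext s
    simp
  · simp only [RingHom.comp_apply, coe_mapRingHom, map_X, RatFunc.algebraMap_X, hιX]
    congr 1
    funext s
    simp

theorem mem_fieldRange_of_natDegree_le
    (hιC : ∀ f : ∀ s, k s, ι (RatFunc.C (πK f)) = πF fun s => RatFunc.C (f s))
    (hιX : ι RatFunc.X = πF fun _ => RatFunc.X) {u : ∀ s, (k s)[X]} {N : ℕ}
    (hu : ∀ s, (u s).natDegree ≤ N) :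
    (πF fun s => algebraMap (k s)[X] (RatFunc (k s)) (u s)) ∈ ι.fieldRange := by
  refine ⟨algebraMap _ _
    ((∑ m ∈ Finset.range (N + 1), monomial m fun s => (u s).coeff m).map πK), ?_⟩
  rw [apply_algebraMap_map_eq hιC hιX]
  congr 1
  funext s
  simp [Polynomial.map_sum, ← as_sum_range' (u s) (N + 1) (Nat.lt_succ_of_le (hu s))]

theorem mem_fieldRange_of_eventually_mul_eq (hUF : IsUltraproduct D πF)
    (hιC : ∀ f : ∀ s, k s, ι (RatFunc.C (πK f)) = πF fun s => RatFunc.C (f s))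
    (hιX : ι RatFunc.X = πF fun _ => RatFunc.X) {a : ∀ s, RatFunc (k s)} {N : ℕ}
    (ha : ∀ᶠ s in D, ∃ v u : (k s)[X], v ≠ 0 ∧ v.natDegree ≤ N ∧ u.natDegree ≤ N ∧
      a s * algebraMap (k s)[X] (RatFunc (k s)) v = algebraMap (k s)[X] (RatFunc (k s)) u) :
    πF a ∈ ι.fieldRange := by
  obtain ⟨T, hT, hTs⟩ := ha.exists_mem
  have hexists : ∀ s, ∃ v u : (k s)[X], v.natDegree ≤ N ∧ u.natDegree ≤ N ∧
      (s ∈ T → v ≠ 0 ∧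
        a s * algebraMap (k s)[X] (RatFunc (k s)) v = algebraMap (k s)[X] (RatFunc (k s)) u) := by
    intro s
    by_cases hs : s ∈ T
    · obtain ⟨v, u, hv0, hv, hu, h⟩ := hTs s hs
      exact ⟨v, u, hv, hu, fun _ => ⟨hv0, h⟩⟩
    · exact ⟨0, 0, by simp, by simp, fun h => absurd h hs⟩
  choose v u hv hu hvu using hexists
  have hv0 : (πF fun s => algebraMap (k s)[X] (RatFunc (k s)) (v s)) ≠ 0 :=
    (hUF.ne_zero_iff_eventually _).mpr
      (Filter.mem_of_superset hT fun s hs => by simpa using (hvu s hs).1)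
  have hquot : πF a = (πF fun s => algebraMap (k s)[X] (RatFunc (k s)) (u s)) /
      πF fun s => algebraMap (k s)[X] (RatFunc (k s)) (v s) := by
    rw [eq_div_iff hv0, ← map_mul, hUF.2]
    exact Filter.mem_of_superset hT fun s hs => (hvu s hs).2
  rw [hquot]
  exact ι.fieldRange.div_mem (mem_fieldRange_of_natDegree_le hιC hιX hu)
    (mem_fieldRange_of_natDegree_le hιC hιX hv)

theorem exists_eventually_common_denominator (hK : IsUltraproduct D πK)
    (hUF : IsUltraproduct D πF)
    (hιC : ∀ f : ∀ s, k s, ι (RatFunc.C (πK f)) = πF fun s => RatFunc.C (f s))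
    (hιX : ι RatFunc.X = πF fun _ => RatFunc.X) {P : (RatFunc K)[X]}
    {P' : (∀ s, RatFunc (k s))[X]} (hP'P : P'.map πF = P.map ι)
    (hP'deg : P'.natDegree ≤ P.natDegree) :
    ∃ (g : (∀ s, k s)[X]) (M : ℕ), ∀ᶠ s in D, g.map (Pi.evalRingHom k s) ≠ 0 ∧
      (g.map (Pi.evalRingHom k s)).natDegree ≤ M ∧
      ∀ i, ∃ f : (k s)[X], f.natDegree ≤ M ∧
        (P'.map (Pi.evalRingHom _ s)).coeff i *
          algebraMap (k s)[X] (RatFunc (k s)) (g.map (Pi.evalRingHom k s)) =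
        algebraMap (k s)[X] (RatFunc (k s)) f := by
  obtain ⟨g, f, M, hg0, hgM, hfM, hPgf⟩ := exists_lift_common_denominator hK.1 P
  have hιg : ι (algebraMap K[X] (RatFunc K) (g.map πK)) ≠ 0 := by simpa using hg0
  rw [apply_algebraMap_map_eq hιC hιX, hUF.ne_zero_iff_eventually] at hιg
  have hcoeff : ∀ᶠ s in D, ∀ i ∈ Finset.range (P.natDegree + 1),
      P'.coeff i s * algebraMap (k s)[X] (RatFunc (k s)) (g.map (Pi.evalRingHom k s)) =
        algebraMap (k s)[X] (RatFunc (k s)) ((f i).map (Pi.evalRingHom k s)) := by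
    refine (Filter.eventually_all_finset _).mpr fun i _ => ?_
    refine (hUF.2 (_ * fun s => _) _).mp ?_
    rw [map_mul, ← apply_algebraMap_map_eq hιC hιX, ← apply_algebraMap_map_eq hιC hιX,
      ← coeff_map, hP'P, coeff_map, ← map_mul, hPgf]
  refine ⟨g, M, (hιg.and hcoeff).mono fun s ⟨hgs, hs⟩ => ⟨by simpa using hgs,
    natDegree_map_le.trans hgM, fun i => ?_⟩⟩
  by_cases hi : i ≤ P.natDegree
  · exact ⟨_, natDegree_map_le.trans (hfM i),
      by rw [coeff_map]; exact hs i (Finset.mem_range.mpr (by omega))⟩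
  · exact ⟨0, by simp, by rw [coeff_map, coeff_eq_zero_of_natDegree_lt (by omega)]; simp⟩

theorem mem_lifts_of_monic_dvd_map (hK : IsUltraproduct D πK) (hUF : IsUltraproduct D πF)
    (hιC : ∀ f : ∀ s, k s, ι (RatFunc.C (πK f)) = πF fun s => RatFunc.C (f s))
    (hιX : ι RatFunc.X = πF fun _ => RatFunc.X) {P : (RatFunc K)[X]} (hP : P.Monic)
    {A : UF[X]} (hA : A.Monic) (hAP : A ∣ P.map ι) : A ∈ lifts ι := by
  obtain ⟨B, hAB⟩ := hAP
  have hB : B.Monic := hA.of_mul_monic_left (hAB ▸ hP.map ι)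
  obtain ⟨A', hA'A, hA'deg, hA'⟩ :=
    lifts_and_natDegree_eq_and_monic ((mem_lifts A).mpr (map_surjective πF hUF.1 A)) hA
  obtain ⟨B', hB'B, -, hB'⟩ :=
    lifts_and_natDegree_eq_and_monic ((mem_lifts B).mpr (map_surjective πF hUF.1 B)) hB
  have hP'P : (A' * B').map πF = P.map ι := by rw [Polynomial.map_mul, hA'A, hB'B, hAB]
  have hP'deg : (A' * B').natDegree = P.natDegree := by
    rw [← (hA'.mul hB').natDegree_map πF, hP'P, hP.natDegree_map]
  obtain ⟨g, M, hg⟩ := exists_eventually_common_denominator hK hUF hιC hιX hP'P hP'deg.le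
  refine (lifts_iff_coeff_lifts _).mpr fun j => ?_
  rw [← congrArg (coeff · j) hA'A, coeff_map]
  refine RingHom.mem_fieldRange.mp <| mem_fieldRange_of_eventually_mul_eq hUF hιC hιX
    (N := 2 * A.natDegree * M) (hg.mono fun s ⟨hg0, hgM, hPs⟩ => ?_)
  obtain ⟨u, hudeg, hu⟩ := RatFunc.exists_coeff_mul_pow_eq_algebraMap ((hA'.mul hB').map _)
    (hA'.map _) (by rw [Polynomial.map_mul]; exact dvd_mul_right _ _) hg0 hgM hPs j
  rw [hA'.natDegree_map, hA'deg] at hudeg hu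
  rw [coeff_map] at hu
  refine ⟨_, u, pow_ne_zero _ hg0, natDegree_pow_le.trans ?_, hudeg, hu⟩
  calc _ ≤ A.natDegree * M := Nat.mul_le_mul_left _ hgM
    _ ≤ 2 * A.natDegree * M := by rw [mul_assoc]; omega

end UltraHull

theorem stmt_10_general {S : Type*} (D : Ultrafilter S)
    (k : S → Type*) [∀ s, Field (k s)] (K : Type*) [Field K]
    (πK : (∀ s, k s) →+* K) (hK : IsUltraproduct D πK)
    (UF : Type*) [Field UF] (πF : (∀ s, RatFunc (k s)) →+* UF)
    (hUF : IsUltraproduct D πF)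
    (ι : RatFunc K →+* UF)
    (hιC : ∀ f : ∀ s, k s, ι (RatFunc.C (πK f)) = πF fun s => RatFunc.C (f s))
    (hιX : ι RatFunc.X = πF fun s => RatFunc.X)
    (P : Polynomial (RatFunc K)) :
    Irreducible P ↔ Irreducible (P.map ι) :=
  (irreducible_map_iff_of_forall_dvd_mem_lifts ι
    (fun _ hP _ hA hAP => mem_lifts_of_monic_dvd_map hK hUF hιC hιX hP hA hAP) P).symm

/-- A polynomial over the rational function field `F = K(t)` (`K` the ultraproduct of the
constant fields) is irreducible over `F` iff it is irreducible over the ultra-hull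
`U(F) = ∏ k_s(t) / D`, into which `F` embeds via `ι`. -/
theorem stmt_10 {S : Type*} [Infinite S] (D : Ultrafilter S) (hD : ∀ s : S, D ≠ pure s)
    (k : S → Type*) [∀ s, Field (k s)] (K : Type*) [Field K]
    (πK : (∀ s, k s) →+* K) (hK : IsUltraproduct D πK)
    (UF : Type*) [Field UF] (πF : (∀ s, RatFunc (k s)) →+* UF)
    (hUF : IsUltraproduct D πF)
    (ι : RatFunc K →+* UF)
    (hιC : ∀ f : ∀ s, k s, ι (RatFunc.C (πK f)) = πF fun s => RatFunc.C (f s))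
    (hιX : ι RatFunc.X = πF fun s => RatFunc.X)
    (P : Polynomial (RatFunc K)) :
    Irreducible P ↔ Irreducible (P.map ι) :=
  stmt_10_general D k K πK hK UF πF hUF ι hιC hιX P
end

section
/- Let K = ∏_{s∈S} k_s / D, F = K(t), A = K[t], and U(A) = ∏_{s∈S} k_s[t] / D. Then the set of elements of U(A) that are algebraic over F is exactly A; in particular, the set of elements of the ultra-hull U(F) = ∏_{s∈S} k_s(t)/D that are algebraic over F is exactly F. -/
open Polynomial IsFractionRing

theorem IsUltraproduct.map_eq_zero_iff {S : Type*} {R : S → Type*} [∀ s, CommRing (R s)]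
    {A : Type*} [CommRing A] {D : Ultrafilter S} {π : (∀ s, R s) →+* A}
    (h : IsUltraproduct D π) {f : ∀ s, R s} : π f = 0 ↔ ∀ᶠ s in ↑D, f s = 0 := by
  rw [← map_zero π, h.2]
  rfl

theorem IsAlgebraic.exists_coeff_zero_ne_zero_eval₂_eq_zero {A Fr L : Type*} [CommRing A]
    [IsDomain A] [Field Fr] [Algebra A Fr] [IsFractionRing A Fr] [Field L] [Algebra Fr L]
    {x : L} (hx : IsAlgebraic Fr x) (hx0 : x ≠ 0) :
    ∃ p : A[X], p.coeff 0 ≠ 0 ∧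
      p.eval₂ ((algebraMap Fr L).comp (algebraMap A Fr)) x = 0 := by
  obtain ⟨b, hb, hmap⟩ :=
    IsLocalization.integerNormalization_spec (nonZeroDivisors A) (minpoly Fr x)
  refine ⟨IsLocalization.integerNormalization (nonZeroDivisors A) (minpoly Fr x), fun h0 => ?_,
    IsLocalization.integerNormalization_eval₂_eq_zero _ _ _ (minpoly.aeval Fr x)⟩
  have := congr_arg (coeff · 0) hmap
  rw [coeff_map, coeff_smul, h0, map_zero, Algebra.smul_def] at this
  exact mul_ne_zero (IsFractionRing.to_map_ne_zero_of_mem_nonZeroDivisors hb)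
    (minpoly.coeff_zero_ne_zero hx.isIntegral hx0) this.symm

theorem natDegree_le_natDegree_num_algebraMap {k L : Type*} [Field k] [Field L] [Algebra k[X] L]
    [IsFractionRing k[X] L] (a : k[X]) :
    a.natDegree ≤ (num k[X] (algebraMap k[X] L a)).natDegree := by
  rcases eq_or_ne a 0 with rfl | ha
  · simp
  have hnum : num k[X] (algebraMap k[X] L a) = a * den k[X] (algebraMap k[X] L a) := by
    apply IsFractionRing.injective k[X] L
    rw [map_mul, ← div_eq_iff (IsFractionRing.to_map_ne_zero_of_mem_nonZeroDivisors (den _ _).2),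
      mk'_num_den']
  refine natDegree_le_of_dvd ⟨_, hnum⟩ ?_
  rw [ne_eq, num_eq_zero, map_eq_zero_iff _ (IsFractionRing.injective _ _)]
  exact ha

theorem natDegree_num_den_le_of_aeval_eq_zero {k L : Type*} [Field k] [Field L]
    [Algebra k[X] L] [IsFractionRing k[X] L] {p : k[X][X]} {r : L} (hr : aeval r p = 0)
    (h0 : p.coeff 0 ≠ 0) :
    (num k[X] r).natDegree ≤ (p.coeff 0).natDegree ∧
      (den k[X] r : k[X]).natDegree ≤ p.leadingCoeff.natDegree :=
  ⟨natDegree_le_of_dvd (num_dvd_of_is_root hr) h0,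
    natDegree_le_of_dvd (den_dvd_of_is_root hr)
      (leadingCoeff_ne_zero.2 fun hp => h0 (by rw [hp, coeff_zero]))⟩

noncomputable section UltraHull

variable {S : Type*} {D : Ultrafilter S} {k : S → Type*} [∀ s, Field (k s)]
  {K : Type*} [Field K] {πK : (∀ s, k s) →+* K}
  {UF : Type*} [Field UF] [Algebra (RatFunc K) UF] {πF : (∀ s, RatFunc (k s)) →+* UF}

-- `U(A) ⊆ U(F)` is the range of `familyMap πF`; `polyMap K UF` embeds `A = K[t]` into `U(F)`.
variable (k) in
def piPolyMap : (∀ s, k s)[X] →+* ∀ s, (k s)[X] :=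
  RingHom.pi fun s => mapRingHom (Pi.evalRingHom k s)

variable (πF) in
def familyMap : (∀ s, (k s)[X]) →+* UF :=
  πF.comp (RingHom.pi fun s => (algebraMap (k s)[X] (RatFunc (k s))).comp (Pi.evalRingHom _ s))

variable (K UF) in
abbrev polyMap : K[X] →+* UF :=
  (algebraMap (RatFunc K) UF).comp (algebraMap K[X] (RatFunc K))

theorem polyMap_injective : Function.Injective (polyMap K UF) :=
  (algebraMap (RatFunc K) UF).injective.comp (IsFractionRing.injective _ _)

theorem familyMap_apply (P : ∀ s, (k s)[X]) :
    familyMap πF P = πF fun s => algebraMap (k s)[X] (RatFunc (k s)) (P s) :=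
  rfl

theorem familyMap_eq_familyMap_iff (hUF : IsUltraproduct D πF) {P Q : ∀ s, (k s)[X]} :
    familyMap πF P = familyMap πF Q ↔ ∀ᶠ s in ↑D, P s = Q s := by
  simp only [familyMap_apply, hUF.2, (IsFractionRing.injective _ _).eq_iff]
  rfl

theorem familyMap_ne_zero_iff (hUF : IsUltraproduct D πF) {P : ∀ s, (k s)[X]} :
    familyMap πF P ≠ 0 ↔ ∀ᶠ s in ↑D, P s ≠ 0 := by
  rw [Ne, ← map_zero (familyMap πF), familyMap_eq_familyMap_iff hUF,
    ← Ultrafilter.eventually_not]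
  rfl

theorem polyMap_comp_mapRingHom
    (hC : ∀ f : ∀ s, k s,
      algebraMap (RatFunc K) UF (RatFunc.C (πK f)) = πF fun s => RatFunc.C (f s))
    (hX : algebraMap (RatFunc K) UF RatFunc.X = πF fun _ => RatFunc.X) :
    (polyMap K UF).comp (mapRingHom πK) = (familyMap πF).comp (piPolyMap k) := by
  refine ringHom_ext (fun f => ?_) ?_
  · simpa [familyMap_apply, piPolyMap, RatFunc.algebraMap_C] using hC f
  · simpa [familyMap_apply, piPolyMap, RatFunc.algebraMap_X] using hX

theorem exists_familyMap_eq_polyMap (hK : IsUltraproduct D πK)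
    (hcomp : (polyMap K UF).comp (mapRingHom πK) = (familyMap πF).comp (piPolyMap k))
    (Q : K[X]) :
    ∃ P : ∀ s, (k s)[X], (∀ s, (P s).natDegree ≤ Q.natDegree) ∧
      familyMap πF P = polyMap K UF Q := by
  obtain ⟨q, rfl, hq⟩ := exists_natDegree_eq_of_mem_lifts (mem_lifts_of_surjective hK.1 Q)
  exact ⟨piPolyMap k q, fun s => hq ▸ natDegree_map_le, (RingHom.congr_fun hcomp q).symm⟩

theorem eventually_natDegree_le_of_familyMap_eq (hK : IsUltraproduct D πK)
    (hUF : IsUltraproduct D πF)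
    (hcomp : (polyMap K UF).comp (mapRingHom πK) = (familyMap πF).comp (piPolyMap k))
    {P : ∀ s, (k s)[X]} {Q : K[X]} (h : familyMap πF P = polyMap K UF Q) :
    ∀ᶠ s in ↑D, (P s).natDegree ≤ Q.natDegree := by
  obtain ⟨P', hP'Q, hP'⟩ := exists_familyMap_eq_polyMap hK hcomp Q
  filter_upwards [(familyMap_eq_familyMap_iff hUF).1 (h.trans hP'.symm)] with s hs
  exact hs ▸ hP'Q s

theorem exists_polyMap_eq_familyMap
    (hUF : IsUltraproduct D πF)
    (hcomp : (polyMap K UF).comp (mapRingHom πK) = (familyMap πF).comp (piPolyMap k))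
    {P : ∀ s, (k s)[X]} {N : ℕ} (hP : ∀ᶠ s in ↑D, (P s).natDegree ≤ N) :
    ∃ Q : K[X], polyMap K UF Q = familyMap πF P := by
  set q : (∀ s, k s)[X] := ∑ j ∈ Finset.range (N + 1), monomial j fun s => (P s).coeff j
  refine ⟨q.map πK, (RingHom.congr_fun hcomp q).trans ((familyMap_eq_familyMap_iff hUF).2 ?_)⟩
  filter_upwards [hP] with s hs
  simp only [q, piPolyMap, RingHom.pi_apply, map_sum, coe_mapRingHom, map_monomial]
  exact (as_sum_range' _ _ (Nat.lt_succ_of_le hs)).symm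

theorem exists_map_familyMap_eq_map_polyMap (hK : IsUltraproduct D πK)
    (hcomp : (polyMap K UF).comp (mapRingHom πK) = (familyMap πF).comp (piPolyMap k))
    (Q : K[X][X]) :
    ∃ p : (∀ s, (k s)[X])[X], p.natDegree = Q.natDegree ∧
      p.map (familyMap πF) = Q.map (polyMap K UF) := by
  have hlifts : Q.map (polyMap K UF) ∈ lifts (familyMap πF) := by
    refine (lifts_iff_coeff_lifts _).2 fun i => ?_
    obtain ⟨P, -, hP⟩ := exists_familyMap_eq_polyMap hK hcomp (Q.coeff i)
    exact ⟨P, by rw [hP, coeff_map]⟩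
  obtain ⟨p, hpQ, hpdeg⟩ := exists_natDegree_eq_of_mem_lifts hlifts
  exact ⟨p, hpdeg.trans (natDegree_map_eq_of_injective polyMap_injective Q), hpQ⟩

theorem eval₂_familyMap (p : (∀ s, (k s)[X])[X]) (f : ∀ s, RatFunc (k s)) :
    p.eval₂ (familyMap πF) (πF f) = πF fun s => aeval (f s) (p.map (Pi.evalRingHom _ s)) := by
  rw [familyMap, ← hom_eval₂]
  congr 1
  funext s
  rw [aeval_def, eval₂_map]
  exact hom_eval₂ p _ (Pi.evalRingHom (fun s => RatFunc (k s)) s) f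

theorem exists_eventually_natDegree_num_den_le (hK : IsUltraproduct D πK)
    (hUF : IsUltraproduct D πF)
    (hcomp : (polyMap K UF).comp (mapRingHom πK) = (familyMap πF).comp (piPolyMap k))
    {f : ∀ s, RatFunc (k s)} (hf : IsAlgebraic (RatFunc K) (πF f)) :
    ∃ N, ∀ᶠ s in ↑D, (num (k s)[X] (f s)).natDegree ≤ N ∧
      (den (k s)[X] (f s) : (k s)[X]).natDegree ≤ N := by
  rcases eq_or_ne (πF f) 0 with hf0 | hf0
  · refine ⟨0, (hUF.map_eq_zero_iff.1 hf0).mono fun s hs => ?_⟩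
    rw [hs, num_zero]
    exact ⟨natDegree_zero.le, (natDegree_eq_zero_of_isUnit isUnit_den_zero).le⟩
  obtain ⟨Q, hQ0, hQ⟩ := hf.exists_coeff_zero_ne_zero_eval₂_eq_zero (A := K[X]) hf0
  obtain ⟨p, hpdeg, hpQ⟩ := exists_map_familyMap_eq_map_polyMap hK hcomp Q
  have hcoeff (i : ℕ) : familyMap πF (p.coeff i) = polyMap K UF (Q.coeff i) := by
    rw [← coeff_map, hpQ, coeff_map]
  have hroot : ∀ᶠ s in ↑D, aeval (f s) (p.map (Pi.evalRingHom _ s)) = 0 :=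
    hUF.map_eq_zero_iff.1 (by rw [← eval₂_familyMap, ← eval_map, hpQ, eval_map, hQ])
  have hne {i : ℕ} (hi : Q.coeff i ≠ 0) : ∀ᶠ s in ↑D, p.coeff i s ≠ 0 :=
    (familyMap_ne_zero_iff hUF).1 (by rwa [hcoeff, map_ne_zero_iff _ polyMap_injective])
  have hdeg (i : ℕ) : ∀ᶠ s in ↑D, (p.coeff i s).natDegree ≤ (Q.coeff i).natDegree :=
    eventually_natDegree_le_of_familyMap_eq hK hUF hcomp (hcoeff i)
  set n := Q.natDegree
  have hQn : Q.coeff n ≠ 0 := leadingCoeff_ne_zero.2 fun hQ => hQ0 (by rw [hQ, coeff_zero])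
  refine ⟨max (Q.coeff 0).natDegree (Q.coeff n).natDegree, ?_⟩
  filter_upwards [hroot, hne hQ0, hne hQn, hdeg 0, hdeg n] with s hroot h0 hn hd0 hdn
  have hlead : (p.map (Pi.evalRingHom _ s)).leadingCoeff = p.coeff n s := by
    rw [leadingCoeff, natDegree_eq_of_le_of_coeff_ne_zero (natDegree_map_le.trans hpdeg.le)
      (by rwa [coeff_map]), coeff_map]
    rfl
  have hbound := natDegree_num_den_le_of_aeval_eq_zero hroot (by rwa [coeff_map])
  rw [coeff_map, hlead] at hbound
  exact ⟨hbound.1.trans (hd0.trans (le_max_left _ _)),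
    hbound.2.trans (hdn.trans (le_max_right _ _))⟩

theorem mem_range_of_eventually_natDegree_num_den_le (hUF : IsUltraproduct D πF)
    (hcomp : (polyMap K UF).comp (mapRingHom πK) = (familyMap πF).comp (piPolyMap k))
    {f : ∀ s, RatFunc (k s)} {N : ℕ}
    (hf : ∀ᶠ s in ↑D, (num (k s)[X] (f s)).natDegree ≤ N ∧
      (den (k s)[X] (f s) : (k s)[X]).natDegree ≤ N) :
    πF f ∈ Set.range (algebraMap (RatFunc K) UF) := by
  obtain ⟨U, hU⟩ := exists_polyMap_eq_familyMap hUF hcomp (hf.mono fun _ => And.left)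
  obtain ⟨V, hV⟩ := exists_polyMap_eq_familyMap hUF hcomp (hf.mono fun _ => And.right)
  have hden : familyMap πF (fun s => (den (k s)[X] (f s) : (k s)[X])) ≠ 0 :=
    (familyMap_ne_zero_iff hUF).2 (.of_forall fun s => nonZeroDivisors.coe_ne_zero _)
  refine ⟨algebraMap K[X] (RatFunc K) U / algebraMap K[X] (RatFunc K) V, ?_⟩
  rw [map_div₀]
  change polyMap K UF U / polyMap K UF V = _
  rw [hU, hV, div_eq_iff hden, familyMap_apply, familyMap_apply, ← map_mul]
  congr 1
  funext s
  exact (div_eq_iff (IsFractionRing.to_map_ne_zero_of_mem_nonZeroDivisors (den _ _).2)).1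
    (mk'_num_den' _ (f s))

end UltraHull

theorem stmt_11_general {S : Type*} (D : Ultrafilter S)
    (k : S → Type*) [∀ s, Field (k s)] (K : Type*) [Field K]
    (πK : (∀ s, k s) →+* K) (hK : IsUltraproduct D πK)
    (UF : Type*) [Field UF] [Algebra (RatFunc K) UF]
    (πF : (∀ s, RatFunc (k s)) →+* UF) (hUF : IsUltraproduct D πF)
    (hC : ∀ f : ∀ s, k s,
      algebraMap (RatFunc K) UF (RatFunc.C (πK f)) = πF fun s => RatFunc.C (f s))
    (hX : algebraMap (RatFunc K) UF RatFunc.X = πF fun s => RatFunc.X) :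
    ({x : UF | (∃ P : ∀ s, Polynomial (k s),
        x = πF fun s => algebraMap (Polynomial (k s)) (RatFunc (k s)) (P s)) ∧
        IsAlgebraic (RatFunc K) x}
      = {x : UF | ∃ Q : Polynomial K,
          x = algebraMap (RatFunc K) UF (algebraMap (Polynomial K) (RatFunc K) Q)}) ∧
    ({x : UF | IsAlgebraic (RatFunc K) x} = Set.range (algebraMap (RatFunc K) UF)) := by
  have hcomp := polyMap_comp_mapRingHom hC hX
  constructor
  · ext x
    constructor
    · rintro ⟨⟨P, rfl⟩, hx⟩
      obtain ⟨N, hN⟩ := exists_eventually_natDegree_num_den_le hK hUF hcomp hx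
      obtain ⟨Q, hQ⟩ := exists_polyMap_eq_familyMap hUF hcomp
        (hN.mono fun s hs => (natDegree_le_natDegree_num_algebraMap (P s)).trans hs.1)
      exact ⟨Q, hQ.symm⟩
    · rintro ⟨Q, rfl⟩
      obtain ⟨P, -, hP⟩ := exists_familyMap_eq_polyMap hK hcomp Q
      exact ⟨⟨P, hP.symm⟩, isAlgebraic_algebraMap _⟩
  · ext x
    constructor
    · intro hx
      obtain ⟨f, rfl⟩ := hUF.1 x
      obtain ⟨N, hN⟩ := exists_eventually_natDegree_num_den_le hK hUF hcomp hx
      exact mem_range_of_eventually_natDegree_num_den_le hUF hcomp hN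
    · rintro ⟨r, rfl⟩
      exact isAlgebraic_algebraMap r

/-- The elements of the ultra-hull `U(A) = ∏ k_s[t]/D` that are algebraic over
`F = K(t)` are exactly (the image of) `A = K[t]`; likewise the elements of
`U(F) = ∏ k_s(t)/D` algebraic over `F` are exactly (the image of) `F`. -/
theorem stmt_11 {S : Type*} [Infinite S] (D : Ultrafilter S) (hD : ∀ s : S, D ≠ pure s)
    (k : S → Type*) [∀ s, Field (k s)] (K : Type*) [Field K]
    (πK : (∀ s, k s) →+* K) (hK : IsUltraproduct D πK)
    (UF : Type*) [Field UF] [Algebra (RatFunc K) UF]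
    (πF : (∀ s, RatFunc (k s)) →+* UF) (hUF : IsUltraproduct D πF)
    (hC : ∀ f : ∀ s, k s,
      algebraMap (RatFunc K) UF (RatFunc.C (πK f)) = πF fun s => RatFunc.C (f s))
    (hX : algebraMap (RatFunc K) UF RatFunc.X = πF fun s => RatFunc.X) :
    ({x : UF | (∃ P : ∀ s, Polynomial (k s),
        x = πF fun s => algebraMap (Polynomial (k s)) (RatFunc (k s)) (P s)) ∧
        IsAlgebraic (RatFunc K) x}
      = {x : UF | ∃ Q : Polynomial K,
          x = algebraMap (RatFunc K) UF (algebraMap (Polynomial K) (RatFunc K) Q)}) ∧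
    ({x : UF | IsAlgebraic (RatFunc K) x} = Set.range (algebraMap (RatFunc K) UF)) :=
  stmt_11_general D k K πK hK UF πF hUF hC hX
end

section
/- Let K = ∏_{s∈S} k_s / D, A = K[t], F = K(t), and U(A) = ∏_{s∈S} k_s[t] / D. For any polynomial α ∈ A, the intersection of the ideal αU(A) with the algebraic closure F^alg of F equals the principal ideal αA, i.e., (αU(A)) ∩ F^alg = αA. -/
open Polynomial Finset in
lemma aux_deg_bound {F : Type*} [Field F] {n M : ℕ} (hn : 1 ≤ n) {B : ℕ → Polynomial F}
    (hBn : B n ≠ 0) (hdeg : ∀ i, i ≤ n → (B i).natDegree ≤ M) {p : Polynomial F}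
    (hrel : ∑ i ∈ Finset.range (n + 1), B i * p ^ i = 0) : p.natDegree ≤ M := by
  by_contra hM
  push_neg at hM
  have hp : p ≠ 0 := by
    intro h
    rw [h, natDegree_zero] at hM
    omega
  obtain ⟨m, rfl⟩ := Nat.exists_eq_add_of_le hn
  have hsplit : B (1 + m) * p ^ (1 + m) = -∑ i ∈ Finset.range (1 + m), B i * p ^ i := by
    rw [Finset.sum_range_succ] at hrel
    exact eq_neg_of_add_eq_zero_right hrel
  have h1 : (B (1 + m) * p ^ (1 + m)).natDegree
      = (B (1 + m)).natDegree + (1 + m) * p.natDegree := by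
    rw [Polynomial.natDegree_mul hBn (pow_ne_zero _ hp), Polynomial.natDegree_pow]
  have h2 : (∑ i ∈ Finset.range (1 + m), B i * p ^ i).natDegree ≤ M + m * p.natDegree := by
    apply Polynomial.natDegree_sum_le_of_forall_le
    intro i hi
    refine (Polynomial.natDegree_mul_le).trans ?_
    rw [Polynomial.natDegree_pow]
    have hi' : i ≤ m := by
      have := Finset.mem_range.mp hi; omega
    have := hdeg i (by omega)
    have : i * p.natDegree ≤ m * p.natDegree := Nat.mul_le_mul_right _ hi'
    omega
  rw [hsplit, Polynomial.natDegree_neg] at h1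
  rw [h1] at h2
  have hexp : (1 + m) * p.natDegree = p.natDegree + m * p.natDegree := by ring
  omega

lemma aux_key {S : Type*} (D : Ultrafilter S)
    (k : S → Type*) [∀ s, Field (k s)] (K : Type*) [Field K]
    (πK : (∀ s, k s) →+* K)
    (UF : Type*) [Field UF] [Algebra (RatFunc K) UF]
    (πF : (∀ s, RatFunc (k s)) →+* UF)
    (hC : ∀ f : ∀ s, k s,
      algebraMap (RatFunc K) UF (RatFunc.C (πK f)) = πF fun s => RatFunc.C (f s))
    (hX : algebraMap (RatFunc K) UF RatFunc.X = πF fun s => RatFunc.X)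
    (m : ℕ) (b : ℕ → K) (g : ∀ s, ℕ → k s) (hg : ∀ j, (πK fun s => g s j) = b j) :
    algebraMap (RatFunc K) UF (algebraMap (Polynomial K) (RatFunc K)
        (∑ j ∈ Finset.range m, Polynomial.C (b j) * Polynomial.X ^ j))
      = πF fun s => algebraMap (Polynomial (k s)) (RatFunc (k s))
          (∑ j ∈ Finset.range m, Polynomial.C (g s j) * Polynomial.X ^ j) := by
  have hR : (fun s => algebraMap (Polynomial (k s)) (RatFunc (k s))
        (∑ j ∈ Finset.range m, Polynomial.C (g s j) * Polynomial.X ^ j))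
      = ∑ j ∈ Finset.range m,
          (fun s => RatFunc.C (g s j)) * (fun s => (RatFunc.X : RatFunc (k s))) ^ j := by
    funext s
    simp [map_sum, map_mul, map_pow, RatFunc.algebraMap_C, RatFunc.algebraMap_X,
      Finset.sum_apply, Pi.mul_apply, Pi.pow_apply]
  rw [hR, map_sum, map_sum, map_sum]
  refine Finset.sum_congr rfl fun j _ => ?_
  rw [map_mul, map_pow, RatFunc.algebraMap_C, RatFunc.algebraMap_X, map_mul, map_pow,
    ← hg j, hC, hX, map_mul πF, map_pow πF]

/-- For a polynomial `α ∈ A = K[t]`, the set of elements of the ideal `α·U(A)` of the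
ultra-hull `U(A) = ∏ k_s[t]/D` that are algebraic over `F = K(t)` is exactly the
principal ideal `α·A`. -/
theorem stmt_12 {S : Type*} [Infinite S] (D : Ultrafilter S) (hD : ∀ s : S, D ≠ pure s)
    (k : S → Type*) [∀ s, Field (k s)] (K : Type*) [Field K]
    (πK : (∀ s, k s) →+* K) (hK : IsUltraproduct D πK)
    (UF : Type*) [Field UF] [Algebra (RatFunc K) UF]
    (πF : (∀ s, RatFunc (k s)) →+* UF) (hUF : IsUltraproduct D πF)
    (hC : ∀ f : ∀ s, k s,
      algebraMap (RatFunc K) UF (RatFunc.C (πK f)) = πF fun s => RatFunc.C (f s))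
    (hX : algebraMap (RatFunc K) UF RatFunc.X = πF fun s => RatFunc.X)
    (α : Polynomial K) :
    {x : UF | (∃ P : ∀ s, Polynomial (k s),
        x = algebraMap (RatFunc K) UF (algebraMap (Polynomial K) (RatFunc K) α) *
          πF fun s => algebraMap (Polynomial (k s)) (RatFunc (k s)) (P s)) ∧
        IsAlgebraic (RatFunc K) x}
      = {x : UF | ∃ Q : Polynomial K,
          x = algebraMap (RatFunc K) UF (algebraMap (Polynomial K) (RatFunc K) α) *
            algebraMap (RatFunc K) UF (algebraMap (Polynomial K) (RatFunc K) Q)} := by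
  classical
  obtain ⟨hKsurj, hKeq⟩ := hK
  obtain ⟨hFsurj, hFeq⟩ := hUF
  set ρ : Polynomial K →+* UF :=
    ((algebraMap (RatFunc K) UF).comp (algebraMap (Polynomial K) (RatFunc K))) with hρdef
  have hρinj : Function.Injective ρ :=
    (RingHom.injective (algebraMap (RatFunc K) UF)).comp (RatFunc.algebraMap_injective K)
  choose c hc using hKsurj
  -- lifting polynomials over K to families of polynomials
  set liftP : Polynomial K → ∀ s, Polynomial (k s) := fun a s =>
    ∑ j ∈ Finset.range (a.natDegree + 1), Polynomial.C (c (a.coeff j) s) * Polynomial.X ^ j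
    with hliftP
  have keyP : ∀ a : Polynomial K,
      ρ a = πF fun s => algebraMap (Polynomial (k s)) (RatFunc (k s)) (liftP a s) := by
    intro a
    have hsum : (∑ j ∈ Finset.range (a.natDegree + 1),
        Polynomial.C (a.coeff j) * Polynomial.X ^ j) = a := by
      simp_rw [Polynomial.C_mul_X_pow_eq_monomial]
      exact (a.as_sum_range' _ (Nat.lt_succ_self _)).symm
    rw [hρdef, RingHom.comp_apply]
    simp only [hliftP]
    conv_lhs => rw [← hsum]
    exact aux_key D k K πK UF πF hC hX (a.natDegree + 1) a.coeff
      (fun s j => c (a.coeff j) s) (fun j => hc _)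
  have liftdeg : ∀ (a : Polynomial K) (s : S), (liftP a s).natDegree ≤ a.natDegree := by
    intro a s
    apply Polynomial.natDegree_sum_le_of_forall_le
    intro j hj
    exact (Polynomial.natDegree_C_mul_X_pow_le _ _).trans (by
      have := Finset.mem_range.mp hj; omega)
  have liftne : ∀ a : Polynomial K, a ≠ 0 → {s | liftP a s ≠ 0} ∈ D := by
    intro a ha
    have hlc : a.coeff a.natDegree ≠ 0 := by
      rw [← Polynomial.leadingCoeff]
      exact Polynomial.leadingCoeff_ne_zero.mpr ha
    have hmem : {s | c (a.coeff a.natDegree) s = 0} ∉ D := by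
      intro h
      apply hlc
      rw [← hc (a.coeff a.natDegree)]
      rw [show (0 : K) = πK 0 from (map_zero πK).symm] at *
      exact (hKeq (c (a.coeff a.natDegree)) 0).mpr h
    have hmem' : {s | c (a.coeff a.natDegree) s = 0}ᶜ ∈ D :=
      Ultrafilter.compl_mem_iff_notMem.mpr hmem
    refine D.toFilter.mem_of_superset hmem' ?_
    intro s hs hzero
    apply hs
    have : (liftP a s).coeff a.natDegree = c (a.coeff a.natDegree) s := by
      rw [hliftP]
      simp only [Polynomial.finset_sum_coeff, Polynomial.coeff_C_mul,
        Polynomial.coeff_X_pow, mul_ite, mul_one, mul_zero]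
      rw [Finset.sum_ite_eq (Finset.range (a.natDegree + 1))]
      simp
    simp only [Set.mem_setOf_eq]
    rw [← this, hzero, Polynomial.coeff_zero]
  -- the core: algebraic elements of U(A) are in A
  have core : ∀ P : ∀ s, Polynomial (k s),
      IsAlgebraic (RatFunc K)
        (πF fun s => algebraMap (Polynomial (k s)) (RatFunc (k s)) (P s)) →
      ∃ Q : Polynomial K,
        (πF fun s => algebraMap (Polynomial (k s)) (RatFunc (k s)) (P s)) = ρ Q := by
    intro P halg
    set u := πF fun s => algebraMap (Polynomial (k s)) (RatFunc (k s)) (P s) with hu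
    letI : Algebra (Polynomial K) UF := ρ.toAlgebra
    haveI : IsScalarTower (Polynomial K) (RatFunc K) UF :=
      IsScalarTower.of_algebraMap_eq (fun a => rfl)
    have halg' : IsAlgebraic (Polynomial K) u :=
      (IsFractionRing.isAlgebraic_iff (Polynomial K) (RatFunc K) UF).mpr halg
    obtain ⟨q, hq0, hqev⟩ := halg'
    have hev : Polynomial.eval₂ ρ u q = 0 := hqev
    set n := q.natDegree with hn
    have hrel : ∑ i ∈ Finset.range (n + 1), ρ (q.coeff i) * u ^ i = 0 := by
      rw [Polynomial.eval₂_eq_sum_range] at hev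
      exact hev
    have hlcq : q.coeff n ≠ 0 := by
      rw [hn, ← Polynomial.leadingCoeff]
      exact Polynomial.leadingCoeff_ne_zero.mpr hq0
    rcases Nat.eq_zero_or_pos n with hn0 | hn1
    · exfalso
      rw [hn0] at hrel
      simp only [zero_add, Finset.sum_range_one, pow_zero, mul_one] at hrel
      rw [hn0] at hlcq
      exact hlcq (hρinj (by rw [hrel, map_zero]))
    · set M := (Finset.range (n + 1)).sup fun i => (q.coeff i).natDegree with hM
      -- componentwise relation
      have hrelcomp : {s | ∑ i ∈ Finset.range (n + 1),
          liftP (q.coeff i) s * P s ^ i = 0} ∈ D := by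
        have h1 : πF (fun s => algebraMap (Polynomial (k s)) (RatFunc (k s))
            (∑ i ∈ Finset.range (n + 1), liftP (q.coeff i) s * P s ^ i)) = πF 0 := by
          rw [map_zero]
          rw [← hrel]
          have h2 : (fun s => algebraMap (Polynomial (k s)) (RatFunc (k s))
              (∑ i ∈ Finset.range (n + 1), liftP (q.coeff i) s * P s ^ i))
            = ∑ i ∈ Finset.range (n + 1),
                (fun s => algebraMap (Polynomial (k s)) (RatFunc (k s)) (liftP (q.coeff i) s))
                  * (fun s => algebraMap (Polynomial (k s)) (RatFunc (k s)) (P s)) ^ i := by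
            funext s
            simp [map_sum, map_mul, map_pow, Finset.sum_apply, Pi.mul_apply, Pi.pow_apply]
          rw [h2, map_sum]
          refine Finset.sum_congr rfl fun i _ => ?_
          rw [map_mul, map_pow, keyP]
        have h3 := (hFeq _ _).mp h1
        refine D.toFilter.mem_of_superset h3 ?_
        intro s hs
        simp only [Set.mem_setOf_eq, Pi.zero_apply] at hs ⊢
        apply RatFunc.algebraMap_injective (k s)
        rw [map_zero]
        rw [← hs]
      have hlead := liftne (q.coeff n) hlcq
      have hdegset : {s | (P s).natDegree ≤ M} ∈ D := by
        refine D.toFilter.mem_of_superset (Filter.inter_mem hrelcomp hlead) ?_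
        rintro s ⟨hs1, hs2⟩
        simp only [Set.mem_setOf_eq] at hs1 hs2 ⊢
        refine aux_deg_bound hn1 hs2 (fun i hi => ?_) hs1
        have hmem : i ∈ Finset.range (n + 1) := Finset.mem_range.mpr (Nat.lt_succ_of_le hi)
        exact (liftdeg _ s).trans (Finset.le_sup (f := fun i => (q.coeff i).natDegree) hmem)
      set b : ℕ → K := fun j => πK fun s => (P s).coeff j with hb
      refine ⟨∑ j ∈ Finset.range (M + 1), Polynomial.C (b j) * Polynomial.X ^ j, ?_⟩
      have hkey := aux_key D k K πK UF πF hC hX (M + 1) b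
        (fun s j => (P s).coeff j) (fun j => rfl)
      rw [hρdef]
      rw [RingHom.comp_apply, hkey, hu]
      apply (hFeq _ _).mpr
      refine D.toFilter.mem_of_superset hdegset ?_
      intro s hs
      simp only [Set.mem_setOf_eq] at hs ⊢
      congr 1
      simp_rw [Polynomial.C_mul_X_pow_eq_monomial]
      exact (P s).as_sum_range' (M + 1) (Nat.lt_succ_of_le hs)
  -- finish
  ext x
  simp only [Set.mem_setOf_eq]
  constructor
  · rintro ⟨⟨P, hP⟩, halg⟩
    by_cases hα : α = 0
    · refine ⟨0, ?_⟩
      rw [hP, hα]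
      simp
    · have hαne : algebraMap (RatFunc K) UF (algebraMap (Polynomial K) (RatFunc K) α) ≠ 0 := by
        intro h
        apply hα
        apply hρinj
        rw [map_zero]
        exact h
      have hualg : IsAlgebraic (RatFunc K)
          (πF fun s => algebraMap (Polynomial (k s)) (RatFunc (k s)) (P s)) := by
        have heq : (πF fun s => algebraMap (Polynomial (k s)) (RatFunc (k s)) (P s))
            = algebraMap (RatFunc K) UF ((algebraMap (Polynomial K) (RatFunc K) α)⁻¹) * x := by
          rw [hP, map_inv₀]
          field_simp
        rw [heq, isAlgebraic_iff_isIntegral]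
        exact (isIntegral_algebraMap).mul (isAlgebraic_iff_isIntegral.mp halg)
      obtain ⟨Q, hQ⟩ := core P hualg
      exact ⟨Q, by rw [hP, hQ]; rfl⟩
  · rintro ⟨Q, hQ⟩
    constructor
    · exact ⟨liftP Q, by rw [hQ]; congr 1; exact keyP Q⟩
    · rw [hQ, ← map_mul, ← map_mul]
      exact isAlgebraic_algebraMap _
end

section
/- Let p_s be distinct primes for D-almost all s ∈ S (no single prime occurs D-often). Then the only positive integer dividing the hyperinteger ulim p_s in the ultrapower ∏_{s∈S} ℤ / D is 1. Consequently, if L_s is a cyclic extension of degree p_s over F_s = k_s(t) for D-almost all s (e.g., an Artin–Schreier extension), then the algebraic part of L = ∏_{s∈S} L_s / D over F = K(t) equals F. -/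
open Polynomial Finset in
private lemma myDegBound {R : Type*} [Field R] {d : ℕ} (hd : 0 < d) (P : ℕ → R[X]) (u : R[X])
    (B : ℕ) (hP : ∀ i < d, (P i).natDegree ≤ B)
    (h : u ^ d + ∑ i ∈ Finset.range d, P i * u ^ i = 0) : u.natDegree ≤ B := by
  have h2 : u ^ d = -∑ i ∈ Finset.range d, P i * u ^ i := by
    linear_combination h
  have h3 : (u ^ d).natDegree ≤ B + (d - 1) * u.natDegree := by
    rw [h2, natDegree_neg]
    refine natDegree_sum_le_of_forall_le _ _ fun i hi => ?_
    refine natDegree_mul_le.trans ?_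
    rw [natDegree_pow]
    have h4 := hP i (mem_range.mp hi)
    have h5 : i ≤ d - 1 := by have := mem_range.mp hi; omega
    exact add_le_add h4 (Nat.mul_le_mul_right _ h5)
  rw [natDegree_pow] at h3
  have h6 : d * u.natDegree = (d - 1) * u.natDegree + u.natDegree := by
    cases d with
    | zero => omega
    | succ m => simp [Nat.succ_sub_one, Nat.succ_mul]
  linarith

open Polynomial Finset in
private lemma myNatDegSumLt {R : Type*} [Semiring R] (n : ℕ) (hn : 0 < n) (a : ℕ → R) :
    (∑ j ∈ Finset.range n, Polynomial.C (a j) * Polynomial.X ^ j).natDegree < n := by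
  have : (∑ j ∈ Finset.range n, Polynomial.C (a j) * Polynomial.X ^ j).natDegree ≤ n - 1 := by
    refine natDegree_sum_le_of_forall_le _ _ fun i hi => ?_
    exact (natDegree_C_mul_X_pow_le _ _).trans (by have := mem_range.mp hi; omega)
  omega

open Polynomial Finset in
private lemma myCoeffSum {R : Type*} [Semiring R] (n : ℕ) (a : ℕ → R) (i : ℕ) (h : i < n) :
    (∑ j ∈ Finset.range n, Polynomial.C (a j) * Polynomial.X ^ j).coeff i = a i := by
  rw [Polynomial.finset_sum_coeff]
  simp only [Polynomial.coeff_C_mul, Polynomial.coeff_X_pow, mul_ite, mul_one, mul_zero]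
  rw [Finset.sum_ite_eq (Finset.range n) i a]
  simp [h]

open Polynomial Finset in
private lemma myDegSumLt {R : Type*} [Semiring R] (d : ℕ) (c : ℕ → R) :
    (∑ i ∈ Finset.range d, Polynomial.C (c i) * Polynomial.X ^ i).degree < ((d : ℕ) : WithBot ℕ) := by
  refine lt_of_le_of_lt (Polynomial.degree_sum_le _ _) ?_
  refine Finset.sup_lt_iff (WithBot.bot_lt_coe d) |>.mpr fun i hi => ?_
  exact lt_of_le_of_lt (Polynomial.degree_C_mul_X_pow_le _ _)
    (by exact Nat.cast_lt.mpr (Finset.mem_range.mp hi))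

open Polynomial Finset in
private lemma ratfuncPolySum {K : Type*} [Field K] (q : K[X]) (n : ℕ) (h : q.natDegree < n) :
    algebraMap K[X] (RatFunc K) q
      = ∑ j ∈ Finset.range n, RatFunc.C (q.coeff j) * RatFunc.X ^ j := by
  conv_lhs => rw [q.as_sum_range' n h]
  rw [map_sum]
  refine Finset.sum_congr rfl fun j _ => ?_
  rw [← Polynomial.C_mul_X_pow_eq_monomial, map_mul, map_pow, RatFunc.algebraMap_C,
    RatFunc.algebraMap_X]

open Polynomial Finset in
private lemma polyTransfer {S : Type*} {k : S → Type*} [∀ s, Field (k s)] {K : Type*} [Field K]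
    (πK : (∀ s, k s) →+* K)
    {L : S → Type*} [∀ s, Field (L s)] [∀ s, Algebra (RatFunc (k s)) (L s)]
    {M : Type*} [Field M] [Algebra (RatFunc K) M]
    (πL : (∀ s, L s) →+* M)
    (hC : ∀ f : ∀ s, k s, algebraMap (RatFunc K) M (RatFunc.C (πK f))
        = πL fun s => algebraMap (RatFunc (k s)) (L s) (RatFunc.C (f s)))
    (hX : algebraMap (RatFunc K) M RatFunc.X
        = πL fun s => algebraMap (RatFunc (k s)) (L s) RatFunc.X)
    (n : ℕ) (w : ℕ → ∀ s, k s) :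
    algebraMap (RatFunc K) M (∑ j ∈ Finset.range n, RatFunc.C (πK (w j)) * RatFunc.X ^ j)
      = πL fun s => algebraMap (RatFunc (k s)) (L s)
          (∑ j ∈ Finset.range n, RatFunc.C (w j s) * RatFunc.X ^ j) := by
  have hfn : (fun s => algebraMap (RatFunc (k s)) (L s)
          (∑ j ∈ Finset.range n, RatFunc.C (w j s) * RatFunc.X ^ j))
      = ∑ j ∈ Finset.range n,
          ((fun s => algebraMap (RatFunc (k s)) (L s) (RatFunc.C (w j s)))
            * (fun s => algebraMap (RatFunc (k s)) (L s) RatFunc.X) ^ j) := by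
    funext s
    rw [map_sum, Finset.sum_apply]
    refine Finset.sum_congr rfl fun j _ => ?_
    simp [map_mul, map_pow]
  rw [hfn, map_sum, map_sum]
  refine Finset.sum_congr rfl fun j _ => ?_
  rw [map_mul, map_pow, hC, hX, map_mul, map_pow]



open Polynomial Finset

set_option maxHeartbeats 1000000 in
/-- If the `p s` are primes with no single prime occurring `D`-often, then `1` is the only
positive integer dividing the hyperinteger `ulim p_s`; consequently, if `L s / k_s(t)` is
cyclic of degree `p s` for `D`-almost all `s`, the algebraic part of the ultraproduct `M`
over `F = K(t)` is `F` itself (the trivial intermediate field `⊥`). -/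
theorem stmt_16 {S : Type*} [Infinite S] (D : Ultrafilter S) (hD : ∀ s : S, D ≠ pure s)
    (p : S → ℕ) (hprime : {s | (p s).Prime} ∈ D)
    (hdist : ∀ q : ℕ, {s | p s = q} ∉ D)
    (k : S → Type*) [∀ s, Field (k s)] (K : Type*) [Field K]
    (πK : (∀ s, k s) →+* K) (hK : IsUltraproduct D πK)
    (L : S → Type*) [∀ s, Field (L s)] [∀ s, Algebra (RatFunc (k s)) (L s)]
    (hcyc : {s | IsGalois (RatFunc (k s)) (L s) ∧
        IsCyclic (L s ≃ₐ[RatFunc (k s)] L s) ∧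
        Module.finrank (RatFunc (k s)) (L s) = p s} ∈ D)
    (M : Type*) [Field M] [Algebra (RatFunc K) M]
    (πL : (∀ s, L s) →+* M) (hM : IsUltraproduct D πL)
    (hC : ∀ f : ∀ s, k s,
      algebraMap (RatFunc K) M (RatFunc.C (πK f))
        = πL fun s => algebraMap (RatFunc (k s)) (L s) (RatFunc.C (f s)))
    (hX : algebraMap (RatFunc K) M RatFunc.X
        = πL fun s => algebraMap (RatFunc (k s)) (L s) RatFunc.X) :
    (∀ h : ℕ, 0 < h → {s | h ∣ p s} ∈ D → h = 1) ∧
      algebraicClosure (RatFunc K) M = ⊥ := by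
  constructor
  · intro h h0 hdvd
    by_contra hne
    refine hdist h (Filter.mem_of_superset (Filter.inter_mem hdvd hprime) ?_)
    rintro s ⟨h1, h2⟩
    rcases h2.eq_one_or_self_of_dvd h h1 with h3 | h3
    · exact absurd h3 hne
    · exact h3.symm
  -- setup for part 2
  have hgtD : ∀ n : ℕ, {s | n < p s} ∈ D := by
    have hle : ∀ n : ℕ, {s | p s ≤ n} ∉ D := by
      intro n
      induction n with
      | zero =>
        have he : {s | p s ≤ 0} = {s | p s = 0} := by ext s; simp [Nat.le_zero]
        rw [he]; exact hdist 0
      | succ n ih =>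
        intro hmem
        have he : {s | p s ≤ n + 1} = {s | p s ≤ n} ∪ {s | p s = n + 1} := by
          ext s; simp only [Set.mem_setOf_eq, Set.mem_union]; omega
        rw [he] at hmem
        rcases (Ultrafilter.union_mem_iff).mp hmem with h | h
        · exact ih h
        · exact hdist _ h
    intro n
    have := (Ultrafilter.compl_mem_iff_notMem (f := D) (s := {s | p s ≤ n})).mpr (hle n)
    convert this using 1
    ext s; simp [not_le]
  rw [eq_bot_iff]
  intro x hx
  rw [IntermediateField.mem_bot]
  have hxint : IsIntegral (RatFunc K) x := mem_algebraicClosure_iff'.mp hx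
  set F := RatFunc K with hF
  set A := algebraMap F M with hA
  set d := (minpoly F x).natDegree with hd
  have hd1 : 0 < d := minpoly.natDegree_pos hxint
  set c : ℕ → F := fun i => (minpoly F x).coeff i with hc
  -- the minimal polynomial equation in M
  have heq : x ^ d + ∑ i ∈ Finset.range d, A (c i) * x ^ i = 0 := by
    have h0 := minpoly.aeval F x
    conv_lhs at h0 => rw [(minpoly.monic hxint).as_sum]
    simpa [map_add, map_pow, map_sum, map_mul] using h0
  -- clear denominators
  set q : K[X] := ∏ i ∈ Finset.range d, (c i).denom with hq
  have hqne : q ≠ 0 := Finset.prod_ne_zero_iff.mpr fun i _ => RatFunc.denom_ne_zero _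
  have hbex : ∀ i, ∃ bi : K[X], i < d →
      algebraMap K[X] F bi = c i * algebraMap K[X] F q := by
    intro i
    by_cases hi : i < d
    · obtain ⟨r, hr⟩ := Finset.dvd_prod_of_mem (fun i => (c i).denom)
        (Finset.mem_range.mpr hi)
      refine ⟨(c i).num * r, fun _ => ?_⟩
      rw [hq, hr, map_mul, map_mul, ← mul_assoc]
      congr 1
      have h9 := RatFunc.num_div_denom (c i)
      rw [div_eq_iff (RatFunc.algebraMap_ne_zero (RatFunc.denom_ne_zero (c i)))] at h9
      exact h9
    · exact ⟨0, fun h => absurd h hi⟩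
  choose b hb using hbex
  set B : ℕ → K[X] := fun i => b i * q ^ (d - 1 - i) with hB
  set N : ℕ := 1 + (Finset.range d).sup fun i => (B i).natDegree with hN
  have hN1 : 0 < N := by omega
  have hBN : ∀ i < d, (B i).natDegree < N := fun i hi =>
    lt_of_le_of_lt (Finset.le_sup (f := fun i => (B i).natDegree)
      (Finset.mem_range.mpr hi)) (by omega)
  set y : M := A (algebraMap K[X] F q) * x with hy
  have heqy : y ^ d + ∑ i ∈ Finset.range d, A (algebraMap K[X] F (B i)) * y ^ i = 0 := by
    have expand : ∀ i ∈ Finset.range d,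
        A (algebraMap K[X] F (B i)) * y ^ i
          = A (algebraMap K[X] F q) ^ d * (A (c i) * x ^ i) := by
      intro i hi
      have hi' := Finset.mem_range.mp hi
      have hpow : A (algebraMap K[X] F q) ^ d
          = A (algebraMap K[X] F q) ^ (d - 1 - i) * A (algebraMap K[X] F q)
            * A (algebraMap K[X] F q) ^ i := by
        rw [← pow_succ, ← pow_add]
        congr 1
        omega
      rw [hpow, hB]
      simp only [map_mul, map_pow, mul_pow, hy]
      rw [← map_pow, ← map_pow]
      have hbi : A (algebraMap K[X] F (b i)) = A (c i) * A (algebraMap K[X] F q) := by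
        rw [hb i hi', map_mul]
      rw [hbi]
      ring
    calc y ^ d + ∑ i ∈ Finset.range d, A (algebraMap K[X] F (B i)) * y ^ i
        = A (algebraMap K[X] F q) ^ d
            * (x ^ d + ∑ i ∈ Finset.range d, A (c i) * x ^ i) := by
          rw [mul_add, Finset.mul_sum, hy, mul_pow]
          exact congrArg₂ (· + ·) rfl (Finset.sum_congr rfl expand)
      _ = 0 := by rw [heq, mul_zero]
  -- lift coefficients to the product
  have hwex : ∀ i j : ℕ, ∃ w : ∀ s, k s, πK w = (B i).coeff j := fun i j => hK.1 _
  choose w hw using hwex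
  have hwqex : ∀ j : ℕ, ∃ wq : ∀ s, k s, πK wq = q.coeff j := fun j => hK.1 _
  choose wq hwq using hwqex
  set Nq : ℕ := q.natDegree + 1 with hNq
  set P : ℕ → ∀ s, Polynomial (k s) := fun i s =>
    ∑ j ∈ Finset.range N, Polynomial.C (w i j s) * Polynomial.X ^ j with hP
  set Q : ∀ s, Polynomial (k s) := fun s =>
    ∑ j ∈ Finset.range Nq, Polynomial.C (wq j s) * Polynomial.X ^ j with hQ
  have hPdeg : ∀ i s, (P i s).natDegree < N := fun i s => myNatDegSumLt N hN1 _
  have hQdeg : ∀ s, (Q s).natDegree < Nq := fun s => myNatDegSumLt Nq (by omega) _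
  set G : ∀ s, L s := fun s =>
    algebraMap (RatFunc (k s)) (L s) (algebraMap (Polynomial (k s)) (RatFunc (k s)) (Q s)) with hG
  set PF : ℕ → ∀ s, L s := fun i s =>
    algebraMap (RatFunc (k s)) (L s) (algebraMap (Polynomial (k s)) (RatFunc (k s)) (P i s)) with hPF
  have hPtrans : ∀ i < d, A (algebraMap K[X] F (B i)) = πL (PF i) := by
    intro i hi
    calc A (algebraMap K[X] F (B i))
        = A (∑ j ∈ Finset.range N, RatFunc.C (πK (w i j)) * RatFunc.X ^ j) := by
          rw [ratfuncPolySum (B i) N (hBN i hi)]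
          simp_rw [hw]
      _ = πL (fun s => algebraMap (RatFunc (k s)) (L s)
            (∑ j ∈ Finset.range N, RatFunc.C (w i j s) * RatFunc.X ^ j)) :=
          polyTransfer πK πL hC hX N (w i)
      _ = πL (PF i) := by
          simp only [hPF]
          congr 1
          funext s
          rw [ratfuncPolySum (P i s) N (hPdeg i s)]
          congr 1
          refine Finset.sum_congr rfl fun j hj => ?_
          congr 1
          congr 1
          simp only [hP]
          rw [myCoeffSum N _ j (Finset.mem_range.mp hj)]
  have hQtrans : A (algebraMap K[X] F q) = πL G := by
    calc A (algebraMap K[X] F q)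
        = A (∑ j ∈ Finset.range Nq, RatFunc.C (πK (wq j)) * RatFunc.X ^ j) := by
          rw [ratfuncPolySum q Nq (by omega)]
          simp_rw [hwq]
      _ = πL (fun s => algebraMap (RatFunc (k s)) (L s)
            (∑ j ∈ Finset.range Nq, RatFunc.C (wq j s) * RatFunc.X ^ j)) :=
          polyTransfer πK πL hC hX Nq wq
      _ = πL G := by
          simp only [hG]
          congr 1
          funext s
          rw [ratfuncPolySum (Q s) Nq (hQdeg s)]
          congr 1
          refine Finset.sum_congr rfl fun j hj => ?_
          congr 1
          congr 1
          simp only [hQ]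
          rw [myCoeffSum Nq _ j (Finset.mem_range.mp hj)]
  obtain ⟨e, he⟩ := hM.1 x
  have hEl : πL (fun s => (G s * e s) ^ d
      + ∑ i ∈ Finset.range d, PF i s * (G s * e s) ^ i) = πL 0 := by
    have hfn : (fun s => (G s * e s) ^ d
        + ∑ i ∈ Finset.range d, PF i s * (G s * e s) ^ i)
        = (G * e) ^ d + ∑ i ∈ Finset.range d, PF i * (G * e) ^ i := by
      funext s
      simp [Finset.sum_apply]
    rw [hfn, map_zero, map_add, map_pow, map_mul, map_sum]
    have hyG : πL G * x = y := by rw [hy, hQtrans]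
    have hterm : ∀ i ∈ Finset.range d, πL (PF i * (G * e) ^ i)
        = A (algebraMap K[X] F (B i)) * y ^ i := by
      intro i hi
      rw [map_mul, map_pow, map_mul, hPtrans i (Finset.mem_range.mp hi), he, hyG]
    rw [Finset.sum_congr rfl hterm, he, hyG]
    exact heqy
  have hS0 : {s | (G s * e s) ^ d
      + ∑ i ∈ Finset.range d, PF i s * (G s * e s) ^ i = 0} ∈ D := by
    have := (hM.2 _ _).mp hEl
    simpa using this
  set T : Set S := {s | (G s * e s) ^ d
        + ∑ i ∈ Finset.range d, PF i s * (G s * e s) ^ i = 0}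
      ∩ {s | IsGalois (RatFunc (k s)) (L s) ∧
          IsCyclic (L s ≃ₐ[RatFunc (k s)] L s) ∧
          Module.finrank (RatFunc (k s)) (L s) = p s}
      ∩ {s | d < p s} ∩ {s | (p s).Prime} with hT
  have hTD : T ∈ D := by
    exact Filter.inter_mem (Filter.inter_mem (Filter.inter_mem hS0 hcyc) (hgtD d)) hprime
  -- the per-component argument
  have hmain : ∀ s ∈ T, ∃ u : Polynomial (k s), u.natDegree < N ∧
      G s * e s = algebraMap (RatFunc (k s)) (L s)
        (algebraMap (Polynomial (k s)) (RatFunc (k s)) u) := by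
    rintro s ⟨⟨⟨hs0, hsc⟩, hsd⟩, hsp⟩
    simp only [Set.mem_setOf_eq] at hs0 hsd hsp
    simp only [hPF] at hs0
    obtain ⟨-, -, hrank⟩ := hsc
    haveI : FiniteDimensional (RatFunc (k s)) (L s) :=
      FiniteDimensional.of_finrank_pos (by rw [hrank]; exact hsp.pos)
    set Fs := RatFunc (k s) with hFs
    set ys : L s := G s * e s with hys
    set g : Polynomial Fs := Polynomial.X ^ d
      + ∑ i ∈ Finset.range d, Polynomial.C (algebraMap (Polynomial (k s)) Fs (P i s))
          * Polynomial.X ^ i with hg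
    have hgmonic : g.Monic := Polynomial.monic_X_pow_add (myDegSumLt d _)
    have hgdeg : g.natDegree = d := by
      have hlt : (∑ i ∈ Finset.range d, Polynomial.C (algebraMap (Polynomial (k s)) Fs (P i s))
          * Polynomial.X ^ i).degree < (Polynomial.X ^ d : Polynomial Fs).degree := by
        rw [Polynomial.degree_X_pow]
        exact myDegSumLt d _
      rw [hg]
      rw [Polynomial.natDegree_eq_of_degree_eq_some
        (by rw [Polynomial.degree_add_eq_left_of_degree_lt hlt, Polynomial.degree_X_pow])]
    have hgeval : Polynomial.aeval ys g = 0 := by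
      rw [hg]
      simp only [map_add, map_pow, map_sum, map_mul, Polynomial.aeval_X, Polynomial.aeval_C]
      exact hs0
    have hyint : IsIntegral Fs ys := ⟨g, hgmonic, by rwa [← Polynomial.aeval_def]⟩
    have hdvd' : (minpoly Fs ys).natDegree ∣ p s := hrank ▸ minpoly.degree_dvd hyint
    have hle' : (minpoly Fs ys).natDegree ≤ d := by
      rw [← hgdeg]
      exact Polynomial.natDegree_le_of_dvd (minpoly.dvd Fs ys hgeval) hgmonic.ne_zero
    have h1 : (minpoly Fs ys).natDegree = 1 := by
      rcases hsp.eq_one_or_self_of_dvd _ hdvd' with h | h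
      · exact h
      · omega
    obtain ⟨v, hv⟩ := minpoly.natDegree_eq_one_iff.mp h1
    have hinj : Function.Injective (algebraMap Fs (L s)) := RingHom.injective _
    have hveq : v ^ d + ∑ i ∈ Finset.range d,
        algebraMap (Polynomial (k s)) Fs (P i s) * v ^ i = 0 := by
      apply hinj
      rw [map_add, map_pow, map_sum, map_zero, hv]
      have : ∀ i ∈ Finset.range d,
          algebraMap Fs (L s) (algebraMap (Polynomial (k s)) Fs (P i s) * v ^ i)
            = PF i s * ys ^ i := by
        intro i _
        rw [map_mul, map_pow, hv]
      rw [Finset.sum_congr rfl this]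
      exact hs0
    have hvint : IsIntegral (Polynomial (k s)) v := by
      refine ⟨Polynomial.X ^ d + ∑ i ∈ Finset.range d, Polynomial.C (P i s)
        * Polynomial.X ^ i, Polynomial.monic_X_pow_add (myDegSumLt d _), ?_⟩
      rw [← Polynomial.aeval_def]
      simp only [map_add, map_pow, map_sum, map_mul, Polynomial.aeval_X, Polynomial.aeval_C]
      exact hveq
    obtain ⟨u, hu⟩ := IsIntegrallyClosed.isIntegral_iff.mp hvint
    have hinj2 : Function.Injective (algebraMap (Polynomial (k s)) Fs) :=
      IsFractionRing.injective _ _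
    have hueq : u ^ d + ∑ i ∈ Finset.range d, P i s * u ^ i = 0 := by
      apply hinj2
      rw [map_add, map_pow, map_sum, map_zero, hu]
      have : ∀ i ∈ Finset.range d,
          algebraMap (Polynomial (k s)) Fs (P i s * u ^ i)
            = algebraMap (Polynomial (k s)) Fs (P i s) * v ^ i := by
        intro i _
        rw [map_mul, map_pow, hu]
      rw [Finset.sum_congr rfl this]
      exact hveq
    have hudeg : u.natDegree ≤ N - 1 :=
      myDegBound hd1 (fun i => P i s) u (N - 1)
        (fun i _ => by show (P i s).natDegree ≤ N - 1; have := hPdeg i s; omega) hueq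
    exact ⟨u, by omega, by rw [hu, hv]⟩
  -- reconstruct the rational function over K
  classical
  set uu : ∀ s, Polynomial (k s) := fun s =>
    if h : s ∈ T then (hmain s h).choose else 0 with huu
  have huuT : ∀ s (h : s ∈ T), uu s = (hmain s h).choose := by
    intro s h
    simp only [huu, dif_pos h]
  have hundeg : ∀ s, (uu s).natDegree < N := by
    intro s
    by_cases h : s ∈ T
    · rw [huuT s h]; exact (hmain s h).choose_spec.1
    · have : uu s = 0 := by simp only [huu, dif_neg h]
      rw [this]; simpa using hN1
  set cf : ℕ → ∀ s, k s := fun j s => (uu s).coeff j with hcf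
  set U : F := ∑ j ∈ Finset.range N, RatFunc.C (πK (cf j)) * RatFunc.X ^ j with hU
  have hfinal : A (algebraMap K[X] F q) * x = A U := by
    rw [hQtrans, ← he, ← map_mul, hU, polyTransfer πK πL hC hX N cf]
    apply (hM.2 _ _).mpr
    refine Filter.mem_of_superset hTD ?_
    intro s hs
    show G s * e s = _
    have hcs : (∑ j ∈ Finset.range N, RatFunc.C (cf j s) * RatFunc.X ^ j)
        = algebraMap (Polynomial (k s)) (RatFunc (k s)) (uu s) := by
      rw [ratfuncPolySum (uu s) N (hundeg s)]
    rw [hcs, huuT s hs]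
    exact (hmain s hs).choose_spec.2
  have hAq : A (algebraMap K[X] F q) ≠ 0 := by
    intro h0
    exact RatFunc.algebraMap_ne_zero hqne ((RingHom.injective A) (by rwa [map_zero]))
  refine ⟨U * (algebraMap K[X] F q)⁻¹, ?_⟩
  show A (U * (algebraMap K[X] F q)⁻¹) = x
  rw [map_mul, map_inv₀, mul_inv_eq_iff_eq_mul₀ hAq, mul_comm]
  exact hfinal.symm
end
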